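/- arXiv:1611.03142 — 8 statements merged into one kernel-verified Lean document; each statement's English description precedes it below -/
import Mathlib

section
/- The strong-coupling expansion of the quartic integral converges and sums to a Bessel function: (1/2π) ∑_{p≥0} ((-1)^p/(2^p p!)) g^{-2p} ∫_{-∞}^{∞} x^{2p} e^{-x⁴} dx = (1/√(32π²g²)) e^{1/(32g⁴)} K_{1/4}(1/(32g⁴)) for g > 0, where K_ν is the modified Bessel function of the second kind. -/
/-!
Expanding `exp (-x² / (2g²))` in its power series under `∫ exp (-x⁴)` is legitimate because
`|y|ⁿ / n! ≤ 2⁻ⁿ exp (2|y|)` and `exp (x² / g² - x⁴)` is integrable, so the series of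
integrals converges absolutely to `∫ exp (-x⁴ - x² / (2g²))`. With `x = s sinh (t / 4)` and
`s² = 1 / (2g²)`, the exponent `-x⁴ - s²x²` becomes `s⁴ / 8 - (s⁴ / 8) cosh t` and
`dx = (s / 4) cosh (t / 4) dt`, which is the integral defining `K_{1/4}`.
-/

open MeasureTheory

/-- modified Bessel function of the second kind, K_ν(z) = ∫_0^∞ e^{-z cosh t} cosh(νt) dt. -/
noncomputable def besselK (ν z : ℝ) : ℝ :=
  ∫ t in Set.Ioi (0 : ℝ), Real.exp (-z * Real.cosh t) * Real.cosh (ν * t)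

open Real Set
open scoped Nat

theorem abs_pow_div_factorial_le (y : ℝ) (n : ℕ) :
    |y ^ n / n !| ≤ (1 / 2) ^ n * exp (2 * |y|) := by
  calc |y ^ n / n !| = (1 / 2) ^ n * ((2 * |y|) ^ n / n !) := by
        rw [abs_div, abs_pow, Nat.abs_cast, mul_pow, ← mul_div_assoc, ← mul_assoc, ← mul_pow]
        norm_num
    _ ≤ (1 / 2) ^ n * exp (2 * |y|) := by
        gcongr
        exact pow_div_factorial_le_exp _ (by positivity) n

theorem hasSum_integral_pow_div_factorial_mul {α : Type*} [MeasurableSpace α] {μ : Measure α}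
    {u w : α → ℝ} (hu : AEStronglyMeasurable u μ) (hw : AEStronglyMeasurable w μ)
    (h : Integrable (fun x => exp (2 * |u x|) * w x) μ) :
    HasSum (fun n : ℕ => ∫ x, u x ^ n / n ! * w x ∂μ) (∫ x, exp (u x) * w x ∂μ) := by
  have hbound : ∀ (n : ℕ) x,
      ‖u x ^ n / n ! * w x‖ ≤ (1 / 2) ^ n * ‖exp (2 * |u x|) * w x‖ := by
    intro n x
    rw [norm_mul, norm_mul, norm_of_nonneg (exp_nonneg _), ← mul_assoc]
    exact mul_le_mul_of_nonneg_right (abs_pow_div_factorial_le _ n) (norm_nonneg _)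
  have hint : ∀ n : ℕ, Integrable (fun x => u x ^ n / n ! * w x) μ := fun n =>
    (h.norm.const_mul _).mono' (by fun_prop) (.of_forall (hbound n))
  have hsum : Summable fun n : ℕ => ∫ x, ‖u x ^ n / n ! * w x‖ ∂μ := by
    refine .of_nonneg_of_le (fun n => integral_nonneg fun x => norm_nonneg _) (fun n => ?_)
      (summable_geometric_two.mul_right (∫ x, ‖exp (2 * |u x|) * w x‖ ∂μ))
    rw [← integral_const_mul]
    exact integral_mono (hint n).norm (h.norm.const_mul _) (hbound n)
  have hexp : ∀ x, ∑' n : ℕ, u x ^ n / n ! * w x = exp (u x) * w x := fun x => by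
    rw [exp_eq_exp_ℝ]
    exact ((NormedSpace.expSeries_div_hasSum_exp (u x)).mul_right (w x)).tsum_eq
  simpa only [hexp] using hasSum_integral_of_summable_integral_norm hint hsum

theorem integrable_exp_mul_sq_mul_exp_neg_pow_four (a : ℝ) :
    Integrable fun x : ℝ => exp (a * x ^ 2) * exp (-x ^ 4) := by
  refine ((integrable_exp_neg_mul_sq one_pos).const_mul (exp ((a + 1) ^ 2 / 4))).mono'
    (by fun_prop) (.of_forall fun x => ?_)
  rw [norm_of_nonneg (by positivity), ← exp_add, ← exp_add, exp_le_exp]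
  nlinarith [sq_nonneg ((a + 1) / 2 - x ^ 2)]

theorem sinh_pow_four_add_sinh_sq (v : ℝ) :
    sinh v ^ 4 + sinh v ^ 2 = (cosh (4 * v) - 1) / 8 := by
  rw [show 4 * v = 2 * (2 * v) by ring, cosh_two_mul, cosh_two_mul, sinh_two_mul]
  linear_combination (-(cosh v ^ 2 + 7 * sinh v ^ 2 + 1) / 8) * cosh_sq v

theorem integral_exp_neg_pow_four_sub_mul_sq {s : ℝ} (hs : 0 < s) :
    ∫ x, exp (-x ^ 4 - s ^ 2 * x ^ 2) =
      s / 2 * exp (s ^ 4 / 8) * besselK (1 / 4) (s ^ 4 / 8) := by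
  set f : ℝ ≃o ℝ := (OrderIso.mulLeft₀ (1 / 4 : ℝ) (by norm_num)).trans
    (sinhOrderIso.trans (OrderIso.mulLeft₀ s hs))
  have hf : ∀ t, f t = s * sinh (1 / 4 * t) := fun t => rfl
  have himage : f '' Ioi 0 = Ioi 0 := by rw [f.image_Ioi, hf]; simp
  have hderiv : ∀ t ∈ Ioi (0 : ℝ),
      HasDerivWithinAt f (s / 4 * cosh (1 / 4 * t)) (Ioi 0) t := by
    intro t _
    have h := ((hasDerivAt_id t).const_mul (1 / 4)).sinh.const_mul s
    refine h.hasDerivWithinAt.congr_deriv ?_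
    simp only [id]
    ring
  have hsubst := integral_image_eq_integral_deriv_smul_of_monotoneOn measurableSet_Ioi hderiv
    (f.monotone.monotoneOn _) (fun x => exp (-x ^ 4 - s ^ 2 * x ^ 2))
  have hexponent : ∀ t, exp (-(f t) ^ 4 - s ^ 2 * (f t) ^ 2)
      = exp (s ^ 4 / 8) * exp (-(s ^ 4 / 8) * cosh t) := by
    intro t
    have h := sinh_pow_four_add_sinh_sq (1 / 4 * t)
    rw [show 4 * (1 / 4 * t) = t by ring] at h
    rw [← exp_add, hf]
    congr 1
    linear_combination (-s ^ 4) * h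
  have heven : ∫ x, exp (-x ^ 4 - s ^ 2 * x ^ 2)
      = 2 * ∫ x in Ioi 0, exp (-x ^ 4 - s ^ 2 * x ^ 2) := by
    rw [← integral_comp_abs]
    simp only [Even.pow_abs (by decide : Even 4), Even.pow_abs even_two]
  rw [heven, ← himage, hsubst, besselK, ← integral_const_mul, ← integral_const_mul]
  congr 1
  funext t
  rw [hexponent, smul_eq_mul]
  ring

theorem hasSum_pow_mul_integral_pow_mul_exp_neg_pow_four (c : ℝ) :
    HasSum (fun p : ℕ => (-c) ^ p / p ! * ∫ x : ℝ, x ^ (2 * p) * exp (-x ^ 4))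
      (∫ x, exp (-x ^ 4 - c * x ^ 2)) := by
  have hdom : Integrable fun x : ℝ => exp (2 * |-c * x ^ 2|) * exp (-x ^ 4) := by
    refine (integrable_exp_mul_sq_mul_exp_neg_pow_four (2 * |c|)).congr (.of_forall fun x => ?_)
    simp only [abs_mul, abs_neg, abs_of_nonneg (sq_nonneg x), mul_assoc]
  have h := hasSum_integral_pow_div_factorial_mul (by fun_prop) (by fun_prop) hdom
  convert h using 1
  · funext p
    rw [← integral_const_mul]
    congr 1 with x
    ring
  · congr 1 with x
    rw [← exp_add]
    congr 1
    ring

/-- the strong-coupling expansion of the quartic integral converges and sums to a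
Bessel function. -/
theorem strong_coupling_expansion (g : ℝ) (hg : 0 < g) :
    HasSum
      (fun p : ℕ =>
        (1 / (2 * Real.pi)) * ((-1) ^ p / (2 ^ p * (p.factorial : ℝ))) * g ^ (-(2 * (p : ℤ))) *
          ∫ x : ℝ, x ^ (2 * p) * Real.exp (-x ^ 4))
      ((1 / Real.sqrt (32 * Real.pi ^ 2 * g ^ 2)) * Real.exp (1 / (32 * g ^ 4)) *
        besselK (1 / 4) (1 / (32 * g ^ 4))) := by
  -- `s² = 1 / (2g²)`, written so that the prefactor `s / (4π)` is visibly `1 / √(32π²g²)`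
  set s := 4 * π / √(32 * π ^ 2 * g ^ 2) with hs_def
  have hs2 : s ^ 2 = 1 / (2 * g ^ 2) := by
    rw [div_pow, sq_sqrt (by positivity)]
    field_simp
    ring
  have h := (hasSum_pow_mul_integral_pow_mul_exp_neg_pow_four (s ^ 2)).mul_left (1 / (2 * π))
  rw [integral_exp_neg_pow_four_sub_mul_sq (by positivity)] at h
  convert! h using 1
  · funext p
    rw [show -(2 * (p : ℤ)) = -((2 * p : ℕ) : ℤ) by push_cast; ring, zpow_neg, zpow_natCast,
      hs2, pow_mul, ← neg_div, div_pow, mul_pow]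
    ring
  · have hz : s ^ 4 / 8 = 1 / (32 * g ^ 4) := by
      rw [show s ^ 4 = (s ^ 2) ^ 2 by ring, hs2]
      field_simp
      ring
    have hc : 1 / (2 * π) * (s / 2) = 1 / √(32 * π ^ 2 * g ^ 2) := by
      rw [hs_def]
      field_simp
      ring
    rw [hz, ← hc]
    ring
end

section
/- For integers r ≥ 1, 0 ≤ a < r, and p ≥ 0, the moment integral ∫_{C_{r,a}} x^p e^{-x^r} dx equals Γ((p+1)/r) if r divides p+1-a, and equals 0 otherwise, where C_{r,a} = ∑_{j=0}^{r-1} ω_r^{-ja} B_j with ω_r = e^{2πi/r} and B_j the ray from 0 to ω_r^j·∞. -/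
open MeasureTheory

/-- ω_r = e^{2πi/r} -/
noncomputable def omegaR (r : ℕ) : ℂ := Complex.exp (2 * Real.pi * Complex.I / r)

/-- the moment ∫_{C_{r,a}} x^p e^{-x^r} dx equals Γ((p+1)/r) if r ∣ p+1-a and 0
otherwise, where C_{r,a} = ∑_j ω_r^{-ja} B_j and B_j is the ray from 0 to ω_r^j·∞. -/
theorem pure_phase_moments (r a p : ℕ) (hr : 1 ≤ r) (ha : a < r) :
    (∑ j ∈ Finset.range r,
        omegaR r ^ (-((j : ℤ) * a)) *
          ∫ t in Set.Ioi (0 : ℝ),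
            ((omegaR r ^ j * (t : ℂ)) ^ p * Complex.exp (-(omegaR r ^ j * (t : ℂ)) ^ r) *
              omegaR r ^ j)) =
      if (r : ℤ) ∣ ((p : ℤ) + 1 - a) then Complex.Gamma (((p : ℂ) + 1) / r) else 0 := by
  have hrR : (0 : ℝ) < r := by positivity
  have hζ : IsPrimitiveRoot (omegaR r) r := Complex.isPrimitiveRoot_exp r (by omega)
  set ζ := omegaR r with hζdef
  have hζ0 : ζ ≠ 0 := Complex.exp_ne_zero _
  have hζr : ζ ^ r = 1 := hζ.pow_eq_one
  -- the basic real integral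
  have hreal : ∫ t in Set.Ioi (0 : ℝ), t ^ p * Real.exp (-t ^ r)
      = (1 / r) * Real.Gamma (((p : ℝ) + 1) / r) := by
    rw [← integral_rpow_mul_exp_neg_rpow hrR (lt_of_lt_of_le neg_one_lt_zero (Nat.cast_nonneg p))]
    refine setIntegral_congr_fun measurableSet_Ioi fun x hx => ?_
    rw [← Real.rpow_natCast x p, ← Real.rpow_natCast x r]
  -- the complex version
  have hkey : (∫ t in Set.Ioi (0 : ℝ), ((t : ℂ) ^ p * Complex.exp (-(t : ℂ) ^ r)))
      = (1 / r) * Complex.Gamma (((p : ℂ) + 1) / r) := by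
    have hfun : Set.EqOn (fun t : ℝ => (t : ℂ) ^ p * Complex.exp (-(t : ℂ) ^ r))
        (fun t : ℝ => ((t ^ p * Real.exp (-t ^ r) : ℝ) : ℂ)) (Set.Ioi 0) := by
      intro x hx
      simp only [Complex.ofReal_mul, Complex.ofReal_exp, Complex.ofReal_pow, Complex.ofReal_neg]
    rw [setIntegral_congr_fun measurableSet_Ioi hfun,
      show (∫ x in Set.Ioi (0:ℝ), ((x ^ p * Real.exp (-x ^ r) : ℝ) : ℂ))
        = ((∫ x in Set.Ioi (0:ℝ), x ^ p * Real.exp (-x ^ r) : ℝ) : ℂ) from integral_ofReal, hreal]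
    have h1 : (((((p : ℝ) + 1) / r : ℝ)) : ℂ) = ((p : ℂ) + 1) / r := by push_cast; ring
    rw [Complex.ofReal_mul, ← Complex.Gamma_ofReal, h1]
    push_cast
    ring
  -- simplify each term of the sum
  have hterm : ∀ j ∈ Finset.range r,
      ζ ^ (-((j : ℤ) * a)) * ∫ t in Set.Ioi (0 : ℝ),
          ((ζ ^ j * (t : ℂ)) ^ p * Complex.exp (-(ζ ^ j * (t : ℂ)) ^ r) * ζ ^ j)
        = (ζ ^ ((p : ℤ) + 1 - a)) ^ j *
            ((1 / r) * Complex.Gamma (((p : ℂ) + 1) / r)) := by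
    intro j _
    have hint : (∫ t in Set.Ioi (0 : ℝ),
        ((ζ ^ j * (t : ℂ)) ^ p * Complex.exp (-(ζ ^ j * (t : ℂ)) ^ r) * ζ ^ j))
        = ζ ^ (j * (p + 1)) *
          ∫ t in Set.Ioi (0 : ℝ), ((t : ℂ) ^ p * Complex.exp (-(t : ℂ) ^ r)) := by
      rw [← integral_const_mul]
      refine setIntegral_congr_fun measurableSet_Ioi fun x hx => ?_
      have h1 : (ζ ^ j * (x : ℂ)) ^ r = (x : ℂ) ^ r := by
        rw [mul_pow, ← pow_mul, mul_comm j r, pow_mul, hζr, one_pow, one_mul]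
      rw [h1, mul_pow, ← pow_mul]
      ring
    rw [hint, hkey]
    have : ζ ^ (-((j : ℤ) * a)) * ζ ^ (j * (p + 1)) = (ζ ^ ((p : ℤ) + 1 - a)) ^ j := by
      rw [← zpow_natCast ζ (j * (p + 1)), ← zpow_add₀ hζ0, ← zpow_natCast (ζ ^ ((p : ℤ) + 1 - a)) j,
        ← zpow_mul]
      congr 1
      push_cast
      ring
    rw [← mul_assoc, this]
  rw [Finset.sum_congr rfl hterm, ← Finset.sum_mul]
  set w : ℂ := ζ ^ ((p : ℤ) + 1 - a) with hw
  by_cases hdvd : (r : ℤ) ∣ ((p : ℤ) + 1 - a)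
  · have hw1 : w = 1 := (hζ.zpow_eq_one_iff_dvd _).mpr hdvd
    rw [if_pos hdvd, hw1]
    simp only [one_pow, Finset.sum_const, Finset.card_range, nsmul_eq_mul]
    have : (r : ℂ) ≠ 0 := Nat.cast_ne_zero.mpr (by omega)
    field_simp
  · have hw1 : w ≠ 1 := fun h => hdvd ((hζ.zpow_eq_one_iff_dvd _).mp h)
    have hwr : w ^ r = 1 := by
      rw [hw, ← zpow_natCast, ← zpow_mul, mul_comm, zpow_mul, zpow_natCast, hζr, one_zpow]
    rw [if_neg hdvd, geom_sum_eq hw1, hwr, sub_self, zero_div, zero_mul]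
end

section
/- Generalized Laguerre orthogonality: for α > -1 and nonnegative integers m, n, ∫_0^∞ x^α L_m^{(α)}(x) L_n^{(α)}(x) e^{-x} dx = (Γ(n+α+1)/n!) δ_{mn}, where L_k^{(α)}(x) = ∑_{p=0}^k (-1)^p C(k+α, k-p) x^p/p!. -/
open MeasureTheory

/-- generalized Laguerre polynomial L_k^{(α)}(x) = ∑_{p=0}^k (-1)^p C(k+α,k-p) x^p/p!,
with C(k+α,k-p) = Γ(k+α+1)/(Γ(p+α+1)(k-p)!). -/
noncomputable def laguerre (k : ℕ) (α : ℝ) (x : ℝ) : ℝ :=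
  ∑ p ∈ Finset.range (k + 1),
    (-1) ^ p * (Real.Gamma (k + α + 1) / (Real.Gamma (p + α + 1) * ((k - p).factorial : ℝ))) *
      x ^ p / (p.factorial : ℝ)

open Finset Polynomial Real fwdDiff

/-! The coefficient of `x ^ q` in `L_n^{(α)}` is `Γ(n+α+1)/n! · (-1)^q C(n,q) / Γ(q+α+1)`, so
integrating `x ^ p L_n^{(α)}` against `x ^ α e^{-x}` gives
`Γ(n+α+1)/n! · ∑_q (-1)^q C(n,q) (α+1+q)_p` with the rising factorial `(a)_p = Γ(a+p)/Γ(a)`.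
Up to the sign `(-1)^n` this is the `n`-th forward difference at `α + 1` of the degree-`p`
polynomial `(·)_p`, which vanishes for `p < n` and equals `n!` for `p = n`. Expanding
`L_m^{(α)}` in powers of `x` gives the claim for `m ≤ n`, and symmetry does the rest. -/

theorem sum_neg_one_pow_mul_choose_mul_eq_fwdDiff_iter {R : Type*} [CommRing R]
    (f : R → R) (n : ℕ) (y : R) :
    ∑ k ∈ range (n + 1), (-1) ^ k * n.choose k * f (y + k) = (-1) ^ n * Δ_[1] ^[n] f y := by
  rw [fwdDiff_iter_eq_sum_shift, mul_sum]
  refine sum_congr rfl fun k hk => ?_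
  have hsplit : (-1 : R) ^ n = (-1) ^ k * (-1) ^ (n - k) := by
    rw [← pow_add, Nat.add_sub_cancel' (mem_range_succ_iff.mp hk)]
  have hsq : ((-1 : R) ^ (n - k)) ^ 2 = 1 := by rw [← pow_mul, pow_mul', neg_one_sq, one_pow]
  rw [hsplit, nsmul_one, zsmul_eq_mul]
  push_cast
  linear_combination (-(-1) ^ k * n.choose k * f (y + k)) * hsq

theorem fwdDiff_iter_eval_ascPochhammer_self {R : Type*} [CommRing R] [Nontrivial R]
    [NoZeroDivisors R] (n : ℕ) (y : R) :
    Δ_[1] ^[n] (ascPochhammer R n).eval y = n.factorial := by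
  simpa [ascPochhammer_natDegree, (monic_ascPochhammer R n).leadingCoeff] using
    congr_fun (ascPochhammer R n).fwdDiff_iter_degree_eq_factorial y

theorem fwdDiff_iter_eval_ascPochhammer_of_lt {R : Type*} [CommRing R] [Nontrivial R]
    [NoZeroDivisors R] {p n : ℕ} (h : p < n) :
    Δ_[1] ^[n] (ascPochhammer R p).eval = 0 :=
  fwdDiff_iter_eq_zero_of_degree_lt (by rwa [ascPochhammer_natDegree])

theorem Real.Gamma_add_nat_eq_ascPochhammer_mul {x : ℝ} (hx : ∀ k : ℕ, x ≠ -k) (p : ℕ) :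
    Gamma (x + p) = (ascPochhammer ℝ p).eval x * Gamma x := by
  induction p with
  | zero => simp
  | succ p ih =>
    have hxp : x + p ≠ 0 := fun h => hx p (eq_neg_of_add_eq_zero_left h)
    rw [Nat.cast_succ, ← add_assoc, Gamma_add_one hxp, ih, ascPochhammer_succ_eval]
    ring

theorem integrableOn_rpow_mul_exp_neg {s : ℝ} (hs : -1 < s) :
    IntegrableOn (fun x => x ^ s * exp (-x)) (Set.Ioi 0) := by
  simpa [mul_comm] using GammaIntegral_convergent (s := s + 1) (by linarith)

theorem integral_rpow_mul_exp_neg {s : ℝ} (hs : -1 < s) :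
    ∫ x in Set.Ioi 0, x ^ s * exp (-x) = Gamma (s + 1) := by
  simp [Gamma_eq_integral (s := s + 1) (by linarith), mul_comm]

theorem integral_rpow_mul_sum_mul_exp_neg {ι : Type*} {α : ℝ} (hα : -1 < α) (s : Finset ι)
    (c : ι → ℝ) (e : ι → ℕ) :
    ∫ x in Set.Ioi 0, x ^ α * (∑ i ∈ s, c i * x ^ e i) * exp (-x) =
      ∑ i ∈ s, c i * Gamma (α + e i + 1) := by
  have hα' : ∀ i, -1 < α + e i := fun i => by have := (e i).cast_nonneg (α := ℝ); linarith
  have hexpand : ∀ x ∈ Set.Ioi (0 : ℝ), x ^ α * (∑ i ∈ s, c i * x ^ e i) * exp (-x) =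
      ∑ i ∈ s, c i * (x ^ (α + e i) * exp (-x)) := fun x hx => by
    simp only [rpow_add hx, rpow_natCast, mul_sum, sum_mul]
    exact sum_congr rfl fun i _ => by ring
  rw [setIntegral_congr_fun measurableSet_Ioi hexpand,
    integral_finsetSum _ fun i _ => (integrableOn_rpow_mul_exp_neg (hα' i)).const_mul (c i)]
  exact sum_congr rfl fun i _ => by rw [integral_const_mul, integral_rpow_mul_exp_neg (hα' i)]

noncomputable def laguerreCoeff (n : ℕ) (α : ℝ) (p : ℕ) : ℝ :=
  (-1) ^ p * (Gamma (n + α + 1) / (Gamma (p + α + 1) * (n - p).factorial)) / p.factorial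

theorem laguerre_eq_sum (n : ℕ) (α x : ℝ) :
    laguerre n α x = ∑ p ∈ range (n + 1), laguerreCoeff n α p * x ^ p :=
  sum_congr rfl fun p _ => by rw [laguerreCoeff]; ring

theorem laguerreCoeff_self {α : ℝ} (hα : -1 < α) (n : ℕ) :
    laguerreCoeff n α n = (-1) ^ n / n.factorial := by
  have hpos : 0 < (n : ℝ) + α + 1 := by have := n.cast_nonneg (α := ℝ); linarith
  simp [laguerreCoeff, (Gamma_pos_of_pos hpos).ne']

theorem laguerreCoeff_mul_Gamma {α : ℝ} (hα : -1 < α) {n q : ℕ} (hq : q ≤ n) (p : ℕ) :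
    laguerreCoeff n α q * Gamma (α + ↑(p + q) + 1) =
      Gamma (n + α + 1) / n.factorial *
        ((-1) ^ q * n.choose q * (ascPochhammer ℝ p).eval (α + 1 + q)) := by
  have hpos : 0 < α + 1 + q := by have := q.cast_nonneg (α := ℝ); linarith
  have hGamma : Gamma (α + ↑(p + q) + 1) =
      (ascPochhammer ℝ p).eval (α + 1 + q) * Gamma (α + 1 + q) := by
    rw [← Gamma_add_nat_eq_ascPochhammer_mul
      (fun k => by have := k.cast_nonneg (α := ℝ); linarith)]
    push_cast; ring_nf
  rw [hGamma, laguerreCoeff, Nat.cast_choose ℝ hq, show (q : ℝ) + α + 1 = α + 1 + q by ring]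
  field_simp [(Gamma_pos_of_pos hpos).ne']

theorem sum_laguerreCoeff_mul_Gamma {α : ℝ} (hα : -1 < α) (n p : ℕ) :
    ∑ q ∈ range (n + 1), laguerreCoeff n α q * Gamma (α + ↑(p + q) + 1) =
      Gamma (n + α + 1) / n.factorial *
        ((-1) ^ n * Δ_[1] ^[n] (ascPochhammer ℝ p).eval (α + 1)) := by
  rw [← sum_neg_one_pow_mul_choose_mul_eq_fwdDiff_iter, mul_sum]
  exact sum_congr rfl fun q hq => laguerreCoeff_mul_Gamma hα (mem_range_succ_iff.mp hq) p

theorem sum_laguerreCoeff_mul_Gamma_of_lt {α : ℝ} (hα : -1 < α) {n p : ℕ} (h : p < n) :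
    ∑ q ∈ range (n + 1), laguerreCoeff n α q * Gamma (α + ↑(p + q) + 1) = 0 := by
  rw [sum_laguerreCoeff_mul_Gamma hα, fwdDiff_iter_eval_ascPochhammer_of_lt h, Pi.zero_apply,
    mul_zero, mul_zero]

theorem sum_laguerreCoeff_mul_Gamma_self {α : ℝ} (hα : -1 < α) (n : ℕ) :
    ∑ q ∈ range (n + 1), laguerreCoeff n α q * Gamma (α + ↑(n + q) + 1) =
      (-1) ^ n * Gamma (n + α + 1) := by
  rw [sum_laguerreCoeff_mul_Gamma hα, fwdDiff_iter_eval_ascPochhammer_self]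
  field_simp

theorem integral_laguerre_mul_laguerre {α : ℝ} (hα : -1 < α) (m n : ℕ) :
    ∫ x in Set.Ioi 0, x ^ α * laguerre m α x * laguerre n α x * exp (-x) =
      ∑ p ∈ range (m + 1), laguerreCoeff m α p *
        ∑ q ∈ range (n + 1), laguerreCoeff n α q * Gamma (α + ↑(p + q) + 1) := by
  have hprod : ∀ x : ℝ, x ^ α * laguerre m α x * laguerre n α x =
      x ^ α * ∑ pq ∈ range (m + 1) ×ˢ range (n + 1),
        laguerreCoeff m α pq.1 * laguerreCoeff n α pq.2 * x ^ (pq.1 + pq.2) := fun x => by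
    rw [mul_assoc, laguerre_eq_sum, laguerre_eq_sum, sum_mul_sum, sum_product]
    simp only [pow_add]
    congr 1
    exact sum_congr rfl fun p _ => sum_congr rfl fun q _ => by ring
  simp_rw [hprod]
  rw [integral_rpow_mul_sum_mul_exp_neg hα, sum_product]
  simp only [mul_sum, mul_assoc]

/-- generalized Laguerre orthogonality. -/
theorem laguerre_orthogonality (α : ℝ) (hα : -1 < α) (m n : ℕ) :
    (∫ x in Set.Ioi (0 : ℝ), x ^ α * laguerre m α x * laguerre n α x * Real.exp (-x)) =
      if m = n then Real.Gamma (n + α + 1) / (n.factorial : ℝ) else 0 := by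
  wlog hmn : m ≤ n generalizing m n
  · convert this n m (by omega) using 1
    · exact integral_congr_ae (.of_forall fun x => by ring)
    · rw [if_neg (by omega), if_neg (by omega)]
  rw [integral_laguerre_mul_laguerre hα]
  rcases hmn.lt_or_eq with hlt | rfl
  · rw [if_neg hlt.ne]
    exact sum_eq_zero fun p hp =>
      by rw [sum_laguerreCoeff_mul_Gamma_of_lt hα (by grind), mul_zero]
  · rw [if_pos rfl, sum_range_succ, sum_eq_zero fun p hp =>
        by rw [sum_laguerreCoeff_mul_Gamma_of_lt hα (by grind), mul_zero],
      zero_add, sum_laguerreCoeff_mul_Gamma_self hα, laguerreCoeff_self hα]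
    field_simp
    rw [← pow_mul, pow_mul', neg_one_sq, one_pow]
    ring
end

section
/- Determinant factorization: for natural numbers p, N, a partition λ₁ ≥ … ≥ λ_N ≥ 0 and any function f, det_{1≤I,J≤N} [δ_{p | (λ_I + J − I)} · f((λ_I + J − I)/p)] = δ_p(λ) · ∏_{μ=0}^{p−1} det_{1≤i,j≤n_μ} [f((λ/p^{(μ)})_i + j − i)], where n_μ = ⌊(N−μ−1)/p⌋ + 1, λ/p^{(μ)} are the components of the p-quotient of λ, and δ_p(λ) ∈ {0, ±1} is the p-signature of λ (zero unless λ has trivial remainder data). -/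
open Set

namespace MM

/-- `f : ℕ → ℕ` encodes a partition (0-indexed rows) if it is antitone and eventually zero. -/
def IsPartition (f : ℕ → ℕ) : Prop :=
  Antitone f ∧ ∃ N, ∀ i, N ≤ i → f i = 0

/-- boxes of the Young diagram (0-indexed) -/
def cells (f : ℕ → ℕ) : Set (ℕ × ℕ) := {c | c.2 < f c.1}

noncomputable def size (f : ℕ → ℕ) : ℕ := (cells f).ncard

noncomputable def transpose (f : ℕ → ℕ) : ℕ → ℕ := fun j => {i | j < f i}.ncard

/-- hook length of a box -/
noncomputable def hook (f : ℕ → ℕ) (c : ℕ × ℕ) : ℤ :=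
  (f c.1 : ℤ) + transpose f c.2 - c.1 - c.2 - 1

/-- content of a box -/
def content (c : ℕ × ℕ) : ℤ := (c.2 : ℤ) - c.1

/-- Maya (beta) set of a partition: beads at positions `f i - i - 1`. -/
def maya (f : ℕ → ℕ) : Set ℤ := {z | ∃ i : ℕ, z = (f i : ℤ) - i - 1}

/-- the `i`-th largest element ("bead" of rank `i`) of a set of integers -/
noncomputable def bead (S : Set ℤ) (i : ℕ) : ℤ :=
  sSup {z | z ∈ S ∧ {w | w ∈ S ∧ z < w}.ncard = i}

/-- the partition encoded by a Maya set: row `i` counts holes below bead `i`. -/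
noncomputable def partOf (S : Set ℤ) : ℕ → ℕ :=
  fun i => {t | t ∉ S ∧ t < bead S i}.ncard

/-- column-`μ` bead set: bead `z` lies in column `(-z-1) mod p`. -/
def col (S : Set ℤ) (p μ : ℕ) : Set ℤ := {k | (p : ℤ) * k - μ - 1 ∈ S}

noncomputable def charge (S : Set ℤ) : ℤ :=
  ({z | z ∈ S ∧ 0 ≤ z}.ncard : ℤ) - ({z | z ∉ S ∧ z < 0}.ncard : ℤ)

/-- the `μ`-th component of the `p`-quotient of the partition `f` -/
noncomputable def pquot (f : ℕ → ℕ) (p μ : ℕ) : ℕ → ℕ :=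
  partOf (col (maya f) p μ)

/-- the Maya set of the `p`-core: slide all beads down in each column. -/
noncomputable def coreMaya (f : ℕ → ℕ) (p : ℕ) : Set ℤ :=
  {z | ∃ μ : ℕ, μ < p ∧ ∃ k : ℤ, k < charge (col (maya f) p μ) ∧ z = (p:ℤ) * k - μ - 1}

/-- the `p`-core of `f` -/
noncomputable def pcore (f : ℕ → ℕ) (p : ℕ) : ℕ → ℕ := partOf (coreMaya f p)

/-- the rearrangement map `σ̂`: overall bead rank ↦ `p * (rank within its column) + column`. -/
noncomputable def sigmaHat (f : ℕ → ℕ) (p : ℕ) : ℕ → ℕ :=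
  fun I =>
    p * ({w | w ∈ maya f ∧ bead (maya f) I < w ∧ (p:ℤ) ∣ (w - bead (maya f) I)}.ncard)
      + ((-(bead (maya f) I) - 1) % (p:ℤ)).toNat

/-- the `p`-signature of `f`: the sign of `σ̂` if finitary, else `0`,
computed as the parity of the (finite) number of inversions. -/
noncomputable def psign (f : ℕ → ℕ) (p : ℕ) : ℤ :=
  letI := Classical.propDecidable
  if {q : ℕ × ℕ | q.1 < q.2 ∧ sigmaHat f p q.2 < sigmaHat f p q.1}.Finite then
    (-1) ^ ({q : ℕ × ℕ | q.1 < q.2 ∧ sigmaHat f p q.2 < sigmaHat f p q.1}.ncard)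
  else 0

end MM

/-!
Row `I` of the matrix can only be nonzero in the columns `J ≡ μ [MOD p]`, where `μ` is the
runner of the `p`-abacus carrying the bead `f I - I - 1`, and there it reads `F (level + J / p)`.
If some runner carries more of the first `N` beads than there are such columns, the determinant
vanishes by pigeonhole, and tail beads on over- and under-full runners give `σ̂` infinitely many
inversions, so `psign f p = 0`. Otherwise `σ̂` permutes `{0, …, N - 1}` and fixes everything
above, so `psign f p` is the sign of that permutation. Reordering the rows by `σ̂` and grouping
the columns by residue makes the matrix block diagonal, and since every runner then has charge
`1`, its `i`-th bead sits at level `pquot f p μ i - i`, which turns the `μ`-th block into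
`F (pquot f p μ i + j - i)`.
-/

theorem Finset.exists_lt_of_sum_eq_of_ne {ι : Type*} {s : Finset ι} {a b : ι → ℕ}
    (hsum : ∑ i ∈ s, a i = ∑ i ∈ s, b i) (hne : ∃ i ∈ s, a i ≠ b i) :
    ∃ i ∈ s, a i < b i := by
  by_contra! hle
  obtain ⟨i, hi, hab⟩ := hne
  exact hab ((Finset.sum_eq_sum_iff_of_le hle).mp hsum.symm i hi).symm

theorem Matrix.det_eq_zero_of_card_lt {n R : Type*} [Fintype n] [DecidableEq n] [CommRing R]
    (M : Matrix n n R) (rows cols : Finset n) (hM : ∀ i ∈ rows, ∀ j ∉ cols, M i j = 0)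
    (hcard : cols.card < rows.card) : M.det = 0 := by
  rw [Matrix.det_apply]
  refine Finset.sum_eq_zero fun σ _ => ?_
  suffices ∃ j, M (σ j) j = 0 by
    obtain ⟨j, hj⟩ := this
    rw [Finset.prod_eq_zero (f := fun i => M (σ i) i) (Finset.mem_univ j) hj, smul_zero]
  by_contra! hne
  have hmaps : ∀ i ∈ rows, σ⁻¹ i ∈ cols := fun i hi => by
    by_contra hj
    exact hne (σ⁻¹ i) (by simpa using hM i hi _ hj)
  exact hcard.not_ge (Finset.card_le_card_of_injOn _ hmaps (σ⁻¹).injective.injOn)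

theorem Equiv.Perm.sign_eq_neg_one_pow_card_inversions {n : ℕ} (σ : Equiv.Perm (Fin n)) :
    (Equiv.Perm.sign σ : ℤ) =
      (-1) ^ (Finset.univ.filter fun q : Fin n × Fin n => q.1 < q.2 ∧ σ q.2 < σ q.1).card := by
  rw [σ.sign_eq_prod_prod_Iio, Finset.prod_sigma', Finset.prod_ite]
  simp only [Finset.prod_const_one, Finset.prod_const, one_mul, Units.val_pow_eq_pow_val,
    Units.val_neg, Units.val_one]
  congr 1
  refine Finset.card_nbij' (fun x => (x.2, x.1)) (fun q => ⟨q.2, q.1⟩) ?_ ?_ (fun _ _ => rfl)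
    (fun _ _ => rfl)
  · rintro ⟨j, i⟩ h
    simp only [Finset.coe_filter, Finset.mem_sigma, Finset.mem_univ, Finset.mem_Iio, true_and,
      Set.mem_ofPred_eq, not_lt] at h ⊢
    exact ⟨h.1, h.2.lt_of_ne (σ.injective.ne h.1.ne')⟩
  · rintro ⟨i, j⟩ h
    simp only [Finset.coe_filter, Finset.mem_sigma, Finset.mem_univ, Finset.mem_Iio, true_and,
      Set.mem_ofPred_eq, not_lt] at h ⊢
    exact ⟨h.1, h.2.le⟩

theorem Matrix.det_blockDiagonal' {o R : Type*} {m' : o → Type*} [Fintype o] [DecidableEq o]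
    [∀ i, Fintype (m' i)] [∀ i, DecidableEq (m' i)] [CommRing R]
    (M : ∀ i, Matrix (m' i) (m' i) R) :
    (Matrix.blockDiagonal' M).det = ∏ i, (M i).det := by
  let : LinearOrder o := LinearOrder.lift' _ (Fintype.equivFin o).injective
  rw [(Matrix.blockTriangular_blockDiagonal' M).det]
  refine (Finset.prod_subset (Finset.subset_univ _) fun i _ hi => ?_).trans
    (Finset.prod_congr rfl fun i _ => ?_)
  · have : IsEmpty {a : Σ i, m' i // a.1 = i} :=
      ⟨fun a => hi (a.2 ▸ Finset.mem_image_of_mem _ (Finset.mem_univ a.1))⟩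
    exact Matrix.det_isEmpty
  · let e : m' i ≃ {a : Σ i, m' i // a.1 = i} :=
      { toFun x := ⟨⟨i, x⟩, rfl⟩
        invFun a := a.2 ▸ a.1.2
        left_inv _ := rfl
        right_inv := by rintro ⟨⟨j, x⟩, rfl⟩; rfl }
    rw [← Matrix.det_submatrix_equiv_self e]
    congr 1
    ext x y
    exact Matrix.blockDiagonal'_apply_eq M i x y

namespace MM

def IsMayaSet (S : Set ℤ) : Prop :=
  (∃ a, ∀ z ≤ a, z ∈ S) ∧ ∃ b, ∀ z, b ≤ z → z ∉ S

noncomputable def beadRank (S : Set ℤ) (z : ℤ) : ℕ := {w | w ∈ S ∧ z < w}.ncard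

-- `charge S = excess S 0`
noncomputable def excess (S : Set ℤ) (c : ℤ) : ℤ :=
  ({w | w ∈ S ∧ c ≤ w}.ncard : ℤ) - ({w | w ∉ S ∧ w < c}.ncard : ℤ)

namespace IsMayaSet

variable {S : Set ℤ}

theorem finite_ge (hS : IsMayaSet S) (c : ℤ) : {w | w ∈ S ∧ c ≤ w}.Finite := by
  obtain ⟨b, hb⟩ := hS.2
  refine (Set.finite_Ico c b).subset fun w ⟨hw, hcw⟩ => ⟨hcw, ?_⟩
  by_contra! h
  exact hb w h hw

theorem finite_gt (hS : IsMayaSet S) (z : ℤ) : {w | w ∈ S ∧ z < w}.Finite :=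
  (hS.finite_ge z).subset fun _ ⟨hw, h⟩ => ⟨hw, h.le⟩

theorem finite_holes_lt (hS : IsMayaSet S) (c : ℤ) : {w | w ∉ S ∧ w < c}.Finite := by
  obtain ⟨a, ha⟩ := hS.1
  refine (Set.finite_Ioo a c).subset fun w ⟨hw, hwc⟩ => ⟨?_, hwc⟩
  by_contra! h
  exact hw (ha w h)

theorem ncard_ge_eq_beadRank_add_one (hS : IsMayaSet S) {z : ℤ} (hz : z ∈ S) :
    {w | w ∈ S ∧ z ≤ w}.ncard = beadRank S z + 1 := by
  have : {w | w ∈ S ∧ z ≤ w} = insert z {w | w ∈ S ∧ z < w} := by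
    ext w
    simp only [mem_ofPred_eq, mem_insert_iff]
    constructor
    · rintro ⟨hw, h⟩
      rcases h.eq_or_lt with rfl | h
      exacts [Or.inl rfl, Or.inr ⟨hw, h⟩]
    · rintro (rfl | ⟨hw, h⟩)
      exacts [⟨hz, le_rfl⟩, ⟨hw, h.le⟩]
  rw [this, ncard_insert_of_notMem (by simp) (hS.finite_gt z), beadRank]

theorem beadRank_lt_of_lt (hS : IsMayaSet S) {z z' : ℤ} (hz' : z' ∈ S) (h : z < z') :
    beadRank S z' < beadRank S z :=
  ncard_lt_ncard
    ⟨fun _ ⟨hw, hw'⟩ => ⟨hw, h.trans hw'⟩, fun hsub => (hsub ⟨hz', h⟩).2.false⟩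
    (hS.finite_gt z)

theorem beadRank_injOn (hS : IsMayaSet S) : InjOn (beadRank S) S := by
  intro z hz z' hz' h
  by_contra hne
  rcases lt_or_gt_of_ne hne with hlt | hlt
  · exact (hS.beadRank_lt_of_lt hz' hlt).ne' h
  · exact (hS.beadRank_lt_of_lt hz hlt).ne h

/-- The bead of rank `i + 1` is the largest bead below the bead of rank `i`. -/
theorem exists_beadRank_eq (hS : IsMayaSet S) (i : ℕ) : ∃ z ∈ S, beadRank S z = i := by
  obtain ⟨⟨a, ha⟩, ⟨b, hb⟩⟩ := hS
  have bdd : ∀ z ∈ S, z ≤ b := fun z hz => by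
    by_contra! h
    exact hb z h.le hz
  induction i with
  | zero =>
    obtain ⟨z, hz, hmax⟩ := Int.exists_greatest_of_bdd ⟨b, bdd⟩ ⟨a, ha a le_rfl⟩
    refine ⟨z, hz, ?_⟩
    have : {w | w ∈ S ∧ z < w} = ∅ :=
      eq_empty_of_forall_notMem fun w h => (hmax w h.1).not_gt h.2
    rw [beadRank, this, ncard_empty]
  | succ i ih =>
    obtain ⟨z, hz, rfl⟩ := ih
    obtain ⟨z', ⟨hz', hz'z⟩, hmax⟩ :=
      Int.exists_greatest_of_bdd (P := fun w => w ∈ S ∧ w < z)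
      ⟨z, fun w hw => hw.2.le⟩ ⟨min (z - 1) a, ha _ (min_le_right _ _), by omega⟩
    refine ⟨z', hz', ?_⟩
    have : {w | w ∈ S ∧ z' < w} = {w | w ∈ S ∧ z ≤ w} := by
      ext w
      simp only [mem_ofPred_eq, and_congr_right_iff]
      intro hw
      refine ⟨fun h => ?_, fun h => hz'z.trans_le h⟩
      by_contra! hwz
      exact (hmax w ⟨hw, hwz⟩).not_gt h
    rw [beadRank, this, ncard_ge_eq_beadRank_add_one ⟨⟨a, ha⟩, ⟨b, hb⟩⟩ hz]

theorem bead_eq_of_beadRank_eq (hS : IsMayaSet S) {z : ℤ} {i : ℕ} (hz : z ∈ S)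
    (hi : beadRank S z = i) : bead S i = z := by
  have : {w | w ∈ S ∧ {w' | w' ∈ S ∧ w < w'}.ncard = i} = {z} :=
    eq_singleton_iff_unique_mem.mpr
      ⟨⟨hz, hi⟩, fun w ⟨hw, hwi⟩ => hS.beadRank_injOn hw hz (hwi.trans hi.symm)⟩
  rw [bead, this, csSup_singleton]

theorem bead_mem (hS : IsMayaSet S) (i : ℕ) : bead S i ∈ S := by
  obtain ⟨z, hz, hi⟩ := hS.exists_beadRank_eq i
  rwa [hS.bead_eq_of_beadRank_eq hz hi]

theorem beadRank_bead (hS : IsMayaSet S) (i : ℕ) : beadRank S (bead S i) = i := by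
  obtain ⟨z, hz, hi⟩ := hS.exists_beadRank_eq i
  rwa [hS.bead_eq_of_beadRank_eq hz hi]

/-- Moving the cut from `c` to `c + 1` either loses the bead at `c` or gains the hole at `c`. -/
theorem excess_add_one (hS : IsMayaSet S) (c : ℤ) : excess S (c + 1) = excess S c - 1 := by
  unfold excess
  by_cases hc : c ∈ S
  · have hge : {w | w ∈ S ∧ c ≤ w} = insert c {w | w ∈ S ∧ c + 1 ≤ w} := by
      ext w; simp only [mem_ofPred_eq, mem_insert_iff]; grind
    have hlt : {w | w ∉ S ∧ w < c + 1} = {w | w ∉ S ∧ w < c} := by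
      ext w; simp only [mem_ofPred_eq]; grind
    rw [hge, hlt, ncard_insert_of_notMem (by simp) (hS.finite_ge _)]
    push_cast; ring
  · have hge : {w | w ∈ S ∧ c ≤ w} = {w | w ∈ S ∧ c + 1 ≤ w} := by
      ext w; simp only [mem_ofPred_eq]; grind
    have hlt : {w | w ∉ S ∧ w < c + 1} = insert c {w | w ∉ S ∧ w < c} := by
      ext w; simp only [mem_ofPred_eq, mem_insert_iff]; grind
    rw [hge, hlt, ncard_insert_of_notMem (by simp) (hS.finite_holes_lt _)]
    push_cast; ring

theorem excess_eq (hS : IsMayaSet S) (c : ℤ) : excess S c = charge S - c := by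
  induction c using Int.induction_on with
  | zero => simp [excess, charge]
  | succ c ih => rw [hS.excess_add_one, ih]; ring
  | pred c ih => have := hS.excess_add_one (-c - 1); simp only [sub_add_cancel] at this; omega

theorem bead_eq (hS : IsMayaSet S) (i : ℕ) :
    bead S i = partOf S i + charge S - i - 1 := by
  have h := hS.excess_eq (bead S i)
  rw [excess, hS.ncard_ge_eq_beadRank_add_one (hS.bead_mem i), hS.beadRank_bead] at h
  simp only [partOf]
  push_cast at h ⊢
  omega

end IsMayaSet

section Partition

variable {f : ℕ → ℕ}

def beadPos (f : ℕ → ℕ) (i : ℕ) : ℤ := (f i : ℤ) - i - 1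

theorem beadPos_mem_maya (i : ℕ) : beadPos f i ∈ maya f := ⟨i, rfl⟩

theorem beadPos_strictAnti (hf : Antitone f) : StrictAnti (beadPos f) := fun i j hij => by
  have := hf hij.le
  unfold beadPos; omega

theorem beadPos_of_le {N i : ℕ} (hN : ∀ i, N ≤ i → f i = 0) (hi : N ≤ i) :
    beadPos f i = -i - 1 := by
  simp [beadPos, hN i hi]

theorem isMayaSet_maya (hf : IsPartition f) : IsMayaSet (maya f) := by
  obtain ⟨hanti, N, hN⟩ := hf
  refine ⟨⟨-N - 1, fun z hz => ⟨(-z - 1).toNat, ?_⟩⟩, ⟨f 0, ?_⟩⟩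
  · rw [hN _ (by omega)]; omega
  · rintro z hz ⟨i, rfl⟩
    have := hanti (Nat.zero_le i)
    omega

theorem bead_maya (hf : IsPartition f) (i : ℕ) : bead (maya f) i = beadPos f i := by
  refine (isMayaSet_maya hf).bead_eq_of_beadRank_eq (beadPos_mem_maya i) ?_
  have hanti := beadPos_strictAnti hf.1
  have : {w | w ∈ maya f ∧ beadPos f i < w} = beadPos f '' Iio i := by
    ext w
    constructor
    · rintro ⟨⟨j, rfl⟩, hlt⟩
      exact ⟨j, hanti.lt_iff_gt.mp hlt, rfl⟩
    · rintro ⟨j, hj, rfl⟩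
      exact ⟨beadPos_mem_maya j, hanti.lt_iff_gt.mpr hj⟩
  rw [beadRank, this, ncard_image_of_injective _ hanti.injective, ← Finset.coe_Iio,
    ncard_coe_finset, Nat.card_Iio]

end Partition

section Abacus

variable {p : ℕ}

/-- Position `z` sits on runner `runner p z` at level `level p z` of the `p`-abacus,
matching `col`: `z = p * level p z - runner p z - 1`. -/
def runner (p : ℕ) (z : ℤ) : ℕ := ((-z - 1) % p).toNat

def level (p : ℕ) (z : ℤ) : ℤ := -((-z - 1) / p)

theorem runner_lt (hp : 0 < p) (z : ℤ) : runner p z < p := by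
  have := Int.emod_lt_of_pos (-z - 1) (Int.natCast_pos.mpr hp)
  have := Int.emod_nonneg (-z - 1) (Int.natCast_ne_zero.mpr hp.ne')
  unfold runner; omega

theorem mul_level_sub_runner (hp : 0 < p) (z : ℤ) : p * level p z - runner p z - 1 = z := by
  have := Int.emod_nonneg (-z - 1) (Int.natCast_ne_zero.mpr hp.ne')
  have := Int.mul_ediv_add_emod (-z - 1) p
  unfold runner level
  rw [Int.toNat_of_nonneg (by assumption)]
  linarith

theorem runner_eq {μ : ℕ} {k z : ℤ} (hμ : μ < p) (h : z = p * k - μ - 1) :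
    runner p z = μ := by
  have : -z - 1 = μ + p * (-k) := by rw [h]; ring
  rw [runner, this, Int.add_mul_emod_self_left, Int.emod_eq_of_lt (by positivity) (by omega)]
  simp

theorem level_eq {μ : ℕ} {k z : ℤ} (hμ : μ < p) (h : z = p * k - μ - 1) :
    level p z = k := by
  have hp : 0 < p := by omega
  have := mul_level_sub_runner hp z
  rw [runner_eq hμ h] at this
  exact mul_left_cancel₀ (Int.natCast_ne_zero.mpr hp.ne') (by omega)

theorem level_mem_col (hp : 0 < p) {S : Set ℤ} {z : ℤ} (hz : z ∈ S) :
    level p z ∈ col S p (runner p z) := by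
  rwa [col, mem_ofPred_eq, mul_level_sub_runner hp]

theorem ncard_sameRunner_gt (hp : 0 < p) (S : Set ℤ) (z : ℤ) :
    {w | w ∈ S ∧ z < w ∧ (p : ℤ) ∣ (w - z)}.ncard =
      beadRank (col S p (runner p z)) (level p z) := by
  have hz := mul_level_sub_runner hp z
  have : {w | w ∈ S ∧ z < w ∧ (p : ℤ) ∣ (w - z)} =
      (fun k : ℤ => p * k - runner p z - 1) ''
        {k | k ∈ col S p (runner p z) ∧ level p z < k} := by
    ext w
    constructor
    · rintro ⟨hw, hzw, t, ht⟩
      refine ⟨level p z + t, ⟨?_, ?_⟩, ?_⟩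
      · show _ ∈ S
        convert hw using 1; linarith
      · nlinarith
      · show _ = w; linarith
    · rintro ⟨k, ⟨hk, hlt⟩, rfl⟩
      refine ⟨hk, by nlinarith, k - level p z, by linarith⟩
  rw [this, ncard_image_of_injective]
  · rfl
  · intro k k' h
    exact mul_left_cancel₀ (Int.natCast_ne_zero.mpr hp.ne') (by simpa using h)

theorem dvd_add_one_add_iff (hp : 0 < p) (z : ℤ) (J : ℕ) :
    (p : ℤ) ∣ z + 1 + J ↔ J % p = runner p z := by
  have hz := mul_level_sub_runner hp z
  have hJ : (J : ℤ) = p * (J / p : ℕ) + (J % p : ℕ) := by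
    exact_mod_cast (Nat.div_add_mod J p).symm
  have hlt := runner_lt hp z
  have hJlt := Nat.mod_lt J hp
  constructor
  · intro hd
    have : (p : ℤ) ∣ ((J % p : ℕ) : ℤ) - runner p z := by
      have := hd.sub (dvd_mul_right (p : ℤ) (level p z + (J / p : ℕ)))
      rwa [show z + 1 + J - p * (level p z + (J / p : ℕ)) = ((J % p : ℕ) : ℤ) - runner p z by
        linarith] at this
    have := Int.eq_zero_of_abs_lt_dvd this (by rw [abs_lt]; omega)
    omega
  · intro h
    exact ⟨level p z + (J / p : ℕ), by rw [h] at hJ; linarith⟩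

theorem add_one_add_ediv (hp : 0 < p) {z : ℤ} {J : ℕ} (h : J % p = runner p z) :
    (z + 1 + J) / p = level p z + (J / p : ℕ) := by
  have hz := mul_level_sub_runner hp z
  have hJ : (J : ℤ) = p * (J / p : ℕ) + (J % p : ℕ) := by
    exact_mod_cast (Nat.div_add_mod J p).symm
  rw [h] at hJ
  rw [show z + 1 + J = p * (level p z + (J / p : ℕ)) by linarith,
    Int.mul_ediv_cancel_left _ (Int.natCast_ne_zero.mpr hp.ne')]

end Abacus

theorem IsMayaSet.col {S : Set ℤ} (hS : IsMayaSet S) {p : ℕ} (hp : 0 < p) (μ : ℕ) :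
    IsMayaSet (col S p μ) := by
  obtain ⟨⟨a, ha⟩, ⟨b, hb⟩⟩ := hS
  have hp1 : (1 : ℤ) ≤ p := by exact_mod_cast hp
  refine ⟨⟨-|a|, fun k hk => ha _ ?_⟩, ⟨|b| + μ + 1, fun k hk => hb _ ?_⟩⟩
  · have : (p : ℤ) * k ≤ k := by nlinarith [abs_nonneg a]
    have := neg_abs_le a
    omega
  · have : k ≤ (p : ℤ) * k := by nlinarith [abs_nonneg b]
    have := le_abs_self b
    omega

section Blocks

variable {p N : ℕ}

def blockSize (p N μ : ℕ) : ℕ := (((N : ℤ) - μ - 1).fdiv p + 1).toNat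

theorem lt_blockSize_iff {μ : ℕ} (hμ : μ < p) (j : ℕ) :
    j < blockSize p N μ ↔ p * j + μ < N := by
  have hp : (0 : ℤ) < p := by omega
  rw [blockSize, Int.fdiv_eq_ediv_of_nonneg _ hp.le]
  have := Int.le_ediv_iff_mul_le (a := j) (b := (N : ℤ) - μ - 1) hp
  constructor
  · intro h
    have := this.mp (by omega)
    zify; linarith
  · intro h
    have := this.mpr (by zify at h; linarith)
    omega

theorem mul_add_lt_of_lt_blockSize {μ : ℕ} (hμ : μ < p) (j : Fin (blockSize p N μ)) :
    p * j + μ < N :=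
  (lt_blockSize_iff hμ j).mp j.isLt

/-- Column `J` of the `N × N` matrix is the `(J / p)`-th column of the block `J % p`. -/
def blockEquiv (hp : 0 < p) : (Σ μ : Fin p, Fin (blockSize p N μ)) ≃ Fin N where
  toFun x := ⟨p * x.2 + x.1, mul_add_lt_of_lt_blockSize x.1.isLt x.2⟩
  invFun J := ⟨⟨J % p, Nat.mod_lt _ hp⟩,
    ⟨J / p, (lt_blockSize_iff (Nat.mod_lt _ hp) _).mpr
      ((Nat.div_add_mod J p).trans_lt J.isLt)⟩⟩
  left_inv := by
    rintro ⟨μ, j⟩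
    have hμ : (p * j + μ) % p = μ := by simp [Nat.mod_eq_of_lt μ.isLt]
    have hj : (p * j + μ) / p = j := by
      rw [Nat.mul_add_div hp, Nat.div_eq_of_lt μ.isLt, add_zero]
    exact Sigma.ext (Fin.ext hμ) ((Fin.heq_ext_iff (by simp only [hμ])).mpr hj)
  right_inv J := Fin.ext (Nat.div_add_mod J p)

theorem blockEquiv_apply_val (hp : 0 < p) (x : Σ μ : Fin p, Fin (blockSize p N μ)) :
    (blockEquiv hp x : ℕ) = p * x.2 + x.1 := rfl

theorem sum_blockSize (hp : 0 < p) : ∑ μ ∈ Finset.range p, blockSize p N μ = N := by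
  simpa [Fin.sum_univ_eq_sum_range (blockSize p N)] using
    Fintype.card_congr (blockEquiv (N := N) hp)

theorem card_filter_mod_eq {μ : ℕ} (hμ : μ < p) :
    (Finset.univ.filter fun J : Fin N => (J : ℕ) % p = μ).card = blockSize p N μ := by
  have hp : 0 < p := by omega
  rw [← Finset.card_fin (blockSize p N μ)]
  refine Finset.card_bij' (fun J hJ => ⟨J / p, (lt_blockSize_iff hμ _).mpr ?_⟩)
    (fun j _ => ⟨p * j + μ, mul_add_lt_of_lt_blockSize hμ j⟩) (by simp)
    (by simp [Nat.mod_eq_of_lt hμ]) ?_ ?_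
  · rw [← (Finset.mem_filter.mp hJ).2]
    exact (Nat.div_add_mod J p).trans_lt J.isLt
  · intro J hJ
    ext
    simp only
    rw [← (Finset.mem_filter.mp hJ).2, Nat.div_add_mod]
  · intro j _
    ext
    simp only
    rw [Nat.mul_add_div hp, Nat.div_eq_of_lt hμ, add_zero]

end Blocks

section Runners

variable {f : ℕ → ℕ} {p N : ℕ}

theorem sigmaHat_eq (hf : IsPartition f) (hp : 0 < p) (I : ℕ) :
    sigmaHat f p I = p * beadRank (col (maya f) p (runner p (beadPos f I)))
      (level p (beadPos f I)) + runner p (beadPos f I) := by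
  rw [sigmaHat, bead_maya hf, ncard_sameRunner_gt hp]
  rfl

theorem sigmaHat_injective (hf : IsPartition f) (hp : 0 < p) :
    Function.Injective (sigmaHat f p) := by
  intro I J h
  rw [sigmaHat_eq hf hp, sigmaHat_eq hf hp] at h
  have hrun : runner p (beadPos f I) = runner p (beadPos f J) := by
    simpa [Nat.mul_add_mod, Nat.mod_eq_of_lt (runner_lt hp _)] using congrArg (· % p) h
  rw [hrun] at h
  have hlevel : level p (beadPos f I) = level p (beadPos f J) := by
    refine ((isMayaSet_maya hf).col hp _).beadRank_injOn ?_ (level_mem_col hp (beadPos_mem_maya J))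
      (Nat.eq_of_mul_eq_mul_left hp (by omega))
    rw [← hrun]; exact level_mem_col hp (beadPos_mem_maya I)
  apply (beadPos_strictAnti hf.1).injective
  rw [← mul_level_sub_runner hp (beadPos f I), ← mul_level_sub_runner hp (beadPos f J), hrun,
    hlevel]

noncomputable def runnerCount (f : ℕ → ℕ) (p N μ : ℕ) : ℕ :=
  (Finset.univ.filter fun I : Fin N => runner p (beadPos f I) = μ).card

theorem sum_runnerCount (hp : 0 < p) : ∑ μ ∈ Finset.range p, runnerCount f p N μ = N := by
  classical
  calc ∑ μ ∈ Finset.range p, runnerCount f p N μ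
      = (Finset.univ : Finset (Fin N)).card :=
        (Finset.card_eq_sum_card_fiberwise fun I _ => Finset.mem_range.mpr (runner_lt hp _)).symm
    _ = N := Finset.card_fin N

def IsBalanced (f : ℕ → ℕ) (p N : ℕ) : Prop :=
  ∀ μ < p, runnerCount f p N μ = blockSize p N μ

theorem exists_overfull_and_underfull (hp : 0 < p) (hbal : ¬IsBalanced f p N) :
    (∃ μ < p, blockSize p N μ < runnerCount f p N μ) ∧
      ∃ ν < p, runnerCount f p N ν < blockSize p N ν := by
  have hsum : ∑ μ ∈ Finset.range p, blockSize p N μ =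
      ∑ μ ∈ Finset.range p, runnerCount f p N μ :=
    (sum_blockSize hp).trans (sum_runnerCount hp).symm
  obtain ⟨κ, hκ, hne⟩ :
      ∃ κ ∈ Finset.range p, blockSize p N κ ≠ runnerCount f p N κ := by
    simp only [IsBalanced, not_forall] at hbal
    obtain ⟨κ, hκ, h⟩ := hbal
    exact ⟨κ, Finset.mem_range.mpr hκ, Ne.symm h⟩
  obtain ⟨μ, hμ, hover⟩ := Finset.exists_lt_of_sum_eq_of_ne hsum ⟨κ, hκ, hne⟩
  obtain ⟨ν, hν, hunder⟩ := Finset.exists_lt_of_sum_eq_of_ne hsum.symm ⟨κ, hκ, hne.symm⟩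
  exact ⟨⟨μ, Finset.mem_range.mp hμ, hover⟩, ⟨ν, Finset.mem_range.mp hν, hunder⟩⟩

/-- Rows `I ≥ N` have empty parts, so their beads fill runner `μ` from level
`-blockSize p N μ` downwards. -/
theorem col_maya_eq (hN : ∀ i, N ≤ i → f i = 0) {μ : ℕ} (hμ : μ < p) :
    col (maya f) p μ = (fun I : Fin N => level p (beadPos f I)) ''
      {I | runner p (beadPos f I) = μ} ∪ Iic (-(blockSize p N μ : ℤ)) := by
  have hp : 0 < p := by omega
  ext k
  constructor
  · rintro ⟨i, hi⟩
    change _ = beadPos f i at hi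
    by_cases hiN : i < N
    · exact Or.inl ⟨⟨i, hiN⟩, runner_eq hμ hi.symm, level_eq hμ hi.symm⟩
    · right
      rw [beadPos_of_le hN (not_lt.mp hiN)] at hi
      have hk : k ≤ 0 := by nlinarith
      have hj : ((-k).toNat : ℤ) = -k := Int.toNat_of_nonneg (by omega)
      have := (lt_blockSize_iff (N := N) hμ (-k).toNat).not.mpr fun h => by
        zify at h; rw [hj] at h; linarith
      simp only [mem_Iic]; omega
  · rintro (⟨I, hI, rfl⟩ | hk)
    · show _ ∈ maya f
      rw [← hI, mul_level_sub_runner hp]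
      exact beadPos_mem_maya I
    · simp only [mem_Iic] at hk
      have hbs : ¬ (-k).toNat < blockSize p N μ := by omega
      rw [lt_blockSize_iff hμ] at hbs
      refine ⟨p * (-k).toNat + μ, ?_⟩
      change _ = beadPos f _
      rw [beadPos_of_le hN (by omega)]
      push_cast [Int.toNat_of_nonneg (by omega : 0 ≤ -k)]
      ring

theorem neg_blockSize_lt_level (hf : IsPartition f) (hN : ∀ i, N ≤ i → f i = 0) {μ : ℕ}
    (hμ : μ < p) {I : Fin N} (hI : runner p (beadPos f I) = μ) :
    -(blockSize p N μ : ℤ) < level p (beadPos f I) := by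
  by_contra! hle
  set k := level p (beadPos f I) with hk
  have hi : N ≤ p * (-k).toNat + μ :=
    not_lt.mp fun h => absurd ((lt_blockSize_iff hμ _).mpr h) (by omega)
  have hrow := (beadPos_strictAnti hf.1).injective (a₁ := I) (a₂ := p * (-k).toNat + μ) <| by
    rw [beadPos_of_le hN hi, ← mul_level_sub_runner (by omega : 0 < p) (beadPos f I), hI, ← hk]
    push_cast [Int.toNat_of_nonneg (by omega : 0 ≤ -k)]
    ring
  omega

theorem beadRank_col_maya_neg (hf : IsPartition f) (hN : ∀ i, N ≤ i → f i = 0) {μ : ℕ}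
    (hμ : μ < p) {q : ℕ} (hq : blockSize p N μ ≤ q) :
    beadRank (col (maya f) p μ) (-q) = runnerCount f p N μ + (q - blockSize p N μ) := by
  have hp : 0 < p := by omega
  have : {k | k ∈ col (maya f) p μ ∧ -(q : ℤ) < k} =
      (fun I : Fin N => level p (beadPos f I)) '' {I | runner p (beadPos f I) = μ} ∪
        Ioc (-(q : ℤ)) (-(blockSize p N μ : ℤ)) := by
    rw [col_maya_eq hN hμ]
    ext k
    simp only [mem_ofPred_eq, mem_union, mem_image, mem_Iic, mem_Ioc]
    constructor
    · rintro ⟨h | h, hk⟩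
      exacts [Or.inl h, Or.inr ⟨hk, h⟩]
    · rintro (⟨I, hI, rfl⟩ | ⟨hk, h⟩)
      · exact ⟨Or.inl ⟨I, hI, rfl⟩, by
          have := neg_blockSize_lt_level hf hN hμ hI; omega⟩
      · exact ⟨Or.inr h, hk⟩
  have hinj : InjOn (fun I : Fin N => level p (beadPos f I)) {I | runner p (beadPos f I) = μ} :=
    fun I hI J hJ h => Fin.ext <| (beadPos_strictAnti hf.1).injective <| by
      rw [← mul_level_sub_runner hp (beadPos f I), ← mul_level_sub_runner hp (beadPos f J)]
      simp only at h
      rw [h, show runner p (beadPos f I) = runner p (beadPos f J) from hI.trans hJ.symm]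
  rw [beadRank, this, ncard_union_eq, hinj.ncard_image]
  · rw [← Finset.coe_Ioc, ncard_coe_finset, Int.card_Ioc, runnerCount, ← ncard_coe_finset]
    simp only [Finset.coe_filter, Finset.mem_univ, true_and]
    omega
  · rw [disjoint_right]
    rintro k ⟨-, hk⟩ ⟨I, hI, rfl⟩
    exact (neg_blockSize_lt_level hf hN hμ hI).not_ge hk

theorem charge_col_maya (hf : IsPartition f) (hN : ∀ i, N ≤ i → f i = 0) {μ : ℕ}
    (hμ : μ < p) :
    charge (col (maya f) p μ) = 1 + runnerCount f p N μ - blockSize p N μ := by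
  have hS := (isMayaSet_maya hf).col (by omega : 0 < p) μ
  set n := blockSize p N μ
  have hcol := col_maya_eq (f := f) hN hμ
  have hn : -(n : ℤ) ∈ col (maya f) p μ := by rw [hcol]; exact Or.inr (mem_Iic.mpr le_rfl)
  have hholes : {w | w ∉ col (maya f) p μ ∧ w < -(n : ℤ)} = ∅ :=
    eq_empty_of_forall_notMem fun w hw => hw.1 (by rw [hcol]; exact Or.inr (mem_Iic.mpr hw.2.le))
  have h := hS.excess_eq (-n)
  rw [excess, hS.ncard_ge_eq_beadRank_add_one hn, hholes, ncard_empty,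
    beadRank_col_maya_neg hf hN hμ le_rfl] at h
  push_cast at h
  omega

theorem sigmaHat_of_le (hf : IsPartition f) (hN : ∀ i, N ≤ i → f i = 0) (hp : 0 < p) {I : ℕ}
    (hI : N ≤ I) :
    (sigmaHat f p I : ℤ) =
      I + p * ((runnerCount f p N (I % p) : ℤ) - blockSize p N (I % p)) := by
  have hμ := Nat.mod_lt I hp
  have hdiv : (I : ℤ) = p * (I / p : ℕ) + (I % p : ℕ) := by
    exact_mod_cast (Nat.div_add_mod I p).symm
  have hpos : beadPos f I = p * (-((I / p : ℕ) : ℤ)) - (I % p : ℕ) - 1 := by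
    rw [beadPos_of_le hN hI]
    linarith
  have hq : blockSize p N (I % p) ≤ I / p :=
    not_lt.mp fun h => by have := (lt_blockSize_iff hμ _).mp h; omega
  rw [sigmaHat_eq hf hp, runner_eq hμ hpos, level_eq hμ hpos,
    beadRank_col_maya_neg hf hN hμ hq, hdiv]
  push_cast [Nat.cast_sub hq]
  ring

end Runners

def inversions (g : ℕ → ℕ) : Set (ℕ × ℕ) := {q | q.1 < q.2 ∧ g q.2 < g q.1}

section FixedTail

variable {g : ℕ → ℕ} {N : ℕ}

theorem lt_of_injective_of_fixed (hg : Function.Injective g) (hfix : ∀ n, N ≤ n → g n = n)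
    {n : ℕ} (hn : n < N) : g n < N := by
  by_contra! h
  have := hg (hfix _ h)
  omega

noncomputable def finPerm (hg : Function.Injective g) (hfix : ∀ n, N ≤ n → g n = n) :
    Equiv.Perm (Fin N) :=
  Equiv.ofBijective (fun i => ⟨g i, lt_of_injective_of_fixed hg hfix i.isLt⟩)
    (Finite.injective_iff_bijective.mp fun _ _ h => Fin.ext (hg (congrArg Fin.val h)))

theorem finPerm_apply_val (hg : Function.Injective g) (hfix : ∀ n, N ≤ n → g n = n)
    (i : Fin N) :
    (finPerm hg hfix i : ℕ) = g i := rfl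

theorem inversions_eq_image (hg : Function.Injective g) (hfix : ∀ n, N ≤ n → g n = n) :
    inversions g = (fun q : Fin N × Fin N => ((q.1 : ℕ), (q.2 : ℕ))) ''
      ↑(Finset.univ.filter fun q : Fin N × Fin N =>
        q.1 < q.2 ∧ finPerm hg hfix q.2 < finPerm hg hfix q.1) := by
  ext ⟨a, b⟩
  constructor
  · intro h
    obtain ⟨hab, hinv⟩ : a < b ∧ g b < g a := h
    have hb : b < N := by
      by_contra! hb
      rw [hfix b hb] at hinv
      by_cases ha : a < N
      · exact (lt_of_injective_of_fixed hg hfix ha).not_ge (by omega)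
      · rw [hfix a (by omega)] at hinv; omega
    refine ⟨(⟨a, hab.trans hb⟩, ⟨b, hb⟩), ?_, rfl⟩
    simp only [Finset.coe_filter, Finset.mem_univ, true_and, mem_ofPred_eq, Fin.lt_def,
      finPerm_apply_val]
    exact ⟨hab, hinv⟩
  · rintro ⟨⟨i, j⟩, hq, h⟩
    simp only [Prod.mk.injEq] at h
    obtain ⟨rfl, rfl⟩ := h
    simp only [Finset.coe_filter, Finset.mem_univ, true_and, mem_ofPred_eq, Fin.lt_def,
      finPerm_apply_val] at hq
    exact hq

theorem neg_one_pow_ncard_inversions (hg : Function.Injective g)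
    (hfix : ∀ n, N ≤ n → g n = n) :
    (inversions g).Finite ∧
      (-1 : ℤ) ^ (inversions g).ncard = Equiv.Perm.sign (finPerm hg hfix) := by
  have hinj : Function.Injective fun q : Fin N × Fin N => ((q.1 : ℕ), (q.2 : ℕ)) :=
    fun q q' h => Prod.ext (Fin.ext (congrArg Prod.fst h)) (Fin.ext (congrArg Prod.snd h))
  rw [inversions_eq_image hg hfix, ncard_image_of_injective _ hinj, ncard_coe_finset,
    Equiv.Perm.sign_eq_neg_one_pow_card_inversions]
  exact ⟨(Finset.finite_toSet _).image _, rfl⟩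

end FixedTail

section Unbalanced

variable {f : ℕ → ℕ} {p N : ℕ} {R : Type*} [CommRing R]

def quotMatrix (f : ℕ → ℕ) (p N : ℕ) (F : ℤ → R) : Matrix (Fin N) (Fin N) R :=
  fun I J => if (p : ℤ) ∣ ((f I : ℤ) + (J : ℤ) - (I : ℤ)) then
    F (((f I : ℤ) + (J : ℤ) - (I : ℤ)) / p) else 0

theorem beadPos_add_one_add (I J : ℕ) : beadPos f I + 1 + J = (f I : ℤ) + J - I := by
  unfold beadPos; ring

theorem quotMatrix_apply_of_mod_ne (hp : 0 < p) (F : ℤ → R) {I J : Fin N}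
    (h : (J : ℕ) % p ≠ runner p (beadPos f I)) : quotMatrix f p N F I J = 0 := by
  rw [quotMatrix, if_neg]
  rwa [← beadPos_add_one_add, dvd_add_one_add_iff hp]

theorem quotMatrix_apply_of_mod_eq (hp : 0 < p) (F : ℤ → R) {I J : Fin N}
    (h : (J : ℕ) % p = runner p (beadPos f I)) :
    quotMatrix f p N F I J = F (level p (beadPos f I) + ((J : ℕ) / p : ℕ)) := by
  rw [quotMatrix, if_pos, ← beadPos_add_one_add, add_one_add_ediv hp h]
  rwa [← beadPos_add_one_add, dvd_add_one_add_iff hp]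

/-- The `runnerCount f p N μ` rows on runner `μ` only have entries in the `blockSize p N μ`
columns `J ≡ μ [MOD p]`. -/
theorem det_quotMatrix_eq_zero (hp : 0 < p) (F : ℤ → R) {μ : ℕ} (hμ : μ < p)
    (h : blockSize p N μ < runnerCount f p N μ) : (quotMatrix f p N F).det = 0 :=
  Matrix.det_eq_zero_of_card_lt _ (Finset.univ.filter fun I : Fin N => runner p (beadPos f I) = μ)
    (Finset.univ.filter fun J : Fin N => (J : ℕ) % p = μ)
    (fun I hI J hJ => quotMatrix_apply_of_mod_ne hp F (by
      simp only [Finset.mem_filter, Finset.mem_univ, true_and] at hI hJ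
      rwa [hI]))
    (by rwa [card_filter_mod_eq hμ])

/-- A tail row on an over-full runner `μ` is pushed up past a tail row on an under-full
runner `ν` one level higher, infinitely often. -/
theorem psign_eq_zero (hf : IsPartition f) (hN : ∀ i, N ≤ i → f i = 0) (hp : 0 < p)
    {μ ν : ℕ} (hμ : μ < p) (hν : ν < p) (hover : blockSize p N μ < runnerCount f p N μ)
    (hunder : runnerCount f p N ν < blockSize p N ν) : psign f p = 0 := by
  have hpair :
      ∀ n : ℕ, (p * (N + n) + μ, p * (N + n + 1) + ν) ∈ inversions (sigmaHat f p) := by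
    intro n
    have hle : N + n ≤ p * (N + n) := Nat.le_mul_of_pos_left _ hp
    have ha := sigmaHat_of_le hf hN hp (I := p * (N + n) + μ) (by omega)
    have hb := sigmaHat_of_le hf hN hp (I := p * (N + n + 1) + ν) (by nlinarith)
    simp only [Nat.mul_add_mod, Nat.mod_eq_of_lt hμ, Nat.mod_eq_of_lt hν] at ha hb
    refine ⟨by nlinarith, ?_⟩
    zify
    rw [ha, hb]
    push_cast
    nlinarith
  have hinf : (inversions (sigmaHat f p)).Infinite :=
    Set.infinite_of_injective_forall_mem (fun n m h => by
      simp only [Prod.mk.injEq] at h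
      nlinarith) hpair
  simp only [psign]
  exact if_neg hinf

end Unbalanced

section Balanced

variable {f : ℕ → ℕ} {p N : ℕ} {R : Type*} [CommRing R]

theorem sigmaHat_of_le_of_isBalanced (hf : IsPartition f) (hN : ∀ i, N ≤ i → f i = 0)
    (hp : 0 < p) (hbal : IsBalanced f p N) {I : ℕ} (hI : N ≤ I) : sigmaHat f p I = I := by
  have := sigmaHat_of_le hf hN hp hI
  rw [hbal _ (Nat.mod_lt I hp), sub_self, mul_zero, add_zero] at this
  exact_mod_cast this

noncomputable def sigmaPerm (hf : IsPartition f) (hN : ∀ i, N ≤ i → f i = 0) (hp : 0 < p)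
    (hbal : IsBalanced f p N) : Equiv.Perm (Fin N) :=
  finPerm (sigmaHat_injective hf hp) fun _ => sigmaHat_of_le_of_isBalanced hf hN hp hbal

theorem psign_eq_sign (hf : IsPartition f) (hN : ∀ i, N ≤ i → f i = 0) (hp : 0 < p)
    (hbal : IsBalanced f p N) : psign f p = Equiv.Perm.sign (sigmaPerm hf hN hp hbal) := by
  obtain ⟨hfin, hsign⟩ := neg_one_pow_ncard_inversions (sigmaHat_injective hf hp)
    fun _ => sigmaHat_of_le_of_isBalanced hf hN hp hbal
  simp only [psign]
  exact (if_pos hfin).trans hsign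

-- A balanced runner has charge `1`, so by `IsMayaSet.bead_eq` its `i`-th bead is at `pquot - i`.
theorem runner_level_of_sigmaHat_eq (hf : IsPartition f) (hN : ∀ i, N ≤ i → f i = 0)
    {μ i I : ℕ} (hμ : μ < p) (hbal : runnerCount f p N μ = blockSize p N μ)
    (h : sigmaHat f p I = p * i + μ) :
    runner p (beadPos f I) = μ ∧ level p (beadPos f I) = pquot f p μ i - i := by
  have hp : 0 < p := by omega
  rw [sigmaHat_eq hf hp] at h
  have hlt := runner_lt hp (beadPos f I)
  have hrun : runner p (beadPos f I) = μ := by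
    have := congrArg (· % p) h
    simpa [Nat.mul_add_mod, Nat.mod_eq_of_lt hlt, Nat.mod_eq_of_lt hμ] using this
  rw [hrun] at h
  have hrank : beadRank (col (maya f) p μ) (level p (beadPos f I)) = i :=
    Nat.eq_of_mul_eq_mul_left hp (by omega)
  have hS := (isMayaSet_maya hf).col hp μ
  have hbead := hS.bead_eq_of_beadRank_eq (hrun ▸ level_mem_col hp (beadPos_mem_maya I)) hrank
  rw [hS.bead_eq, charge_col_maya hf hN hμ, hbal] at hbead
  refine ⟨hrun, ?_⟩
  rw [pquot]
  omega

theorem quotMatrix_submatrix_eq_blockDiagonal' (hf : IsPartition f)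
    (hN : ∀ i, N ≤ i → f i = 0) (hp : 0 < p) (hbal : IsBalanced f p N) (F : ℤ → R) :
    (quotMatrix f p N F).submatrix ((sigmaPerm hf hN hp hbal).symm ∘ blockEquiv hp)
      (blockEquiv hp) =
    Matrix.blockDiagonal' fun μ : Fin p => Matrix.of fun i j : Fin (blockSize p N μ) =>
      F ((pquot f p μ i : ℤ) + (j : ℤ) - (i : ℤ)) := by
  ext ⟨μ, i⟩ ⟨ν, j⟩
  set I := (sigmaPerm hf hN hp hbal).symm (blockEquiv hp ⟨μ, i⟩)
  have hI : sigmaHat f p I = p * i + μ :=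
    congrArg Fin.val ((sigmaPerm hf hN hp hbal).apply_symm_apply (blockEquiv hp ⟨μ, i⟩))
  obtain ⟨hrun, hlevel⟩ := runner_level_of_sigmaHat_eq hf hN μ.isLt (hbal μ μ.isLt) hI
  have hmod : (blockEquiv hp ⟨ν, j⟩ : ℕ) % p = ν := by
    simp [blockEquiv_apply_val, Nat.mod_eq_of_lt ν.isLt]
  simp only [Matrix.submatrix_apply, Function.comp_apply]
  by_cases hνμ : ν = μ
  · subst hνμ
    have hdiv : (blockEquiv hp ⟨ν, j⟩ : ℕ) / p = j := by
      rw [blockEquiv_apply_val, Nat.mul_add_div hp, Nat.div_eq_of_lt ν.isLt, add_zero]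
    rw [quotMatrix_apply_of_mod_eq hp F (hmod.trans hrun.symm), hdiv, hlevel,
      Matrix.blockDiagonal'_apply_eq, Matrix.of_apply]
    congr 1
    ring
  · rw [quotMatrix_apply_of_mod_ne hp F (by rw [hmod, hrun]; exact Fin.val_ne_of_ne hνμ),
      Matrix.blockDiagonal'_apply_ne _ _ _ (Ne.symm hνμ)]

theorem det_quotMatrix_of_isBalanced (hf : IsPartition f) (hN : ∀ i, N ≤ i → f i = 0)
    (hp : 0 < p) (hbal : IsBalanced f p N) (F : ℤ → R) :
    (quotMatrix f p N F).det = psign f p * ∏ μ ∈ Finset.range p,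
      (Matrix.of fun i j : Fin (blockSize p N μ) =>
        F ((pquot f p μ i : ℤ) + (j : ℤ) - (i : ℤ))).det := by
  set σ := sigmaPerm hf hN hp hbal
  set A := quotMatrix f p N F
  have hperm : A.det = Equiv.Perm.sign σ * (A.submatrix σ.symm id).det := by
    have := Matrix.det_permute σ (A.submatrix σ.symm id)
    rw [Matrix.submatrix_submatrix] at this
    simpa using this
  rw [hperm, psign_eq_sign hf hN hp hbal, ← Matrix.det_submatrix_equiv_self (blockEquiv hp),
    Matrix.submatrix_submatrix, Function.id_comp, quotMatrix_submatrix_eq_blockDiagonal',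
    Matrix.det_blockDiagonal', Fin.prod_univ_eq_prod_range (fun μ => (Matrix.of
      fun i j : Fin (blockSize p N μ) => F ((pquot f p μ i : ℤ) + (j : ℤ) - (i : ℤ))).det)]

end Balanced

end MM

/-- determinant factorization into p-quotient blocks, weighted by the p-signature. -/
theorem det_factorization (p N : ℕ) (hp : 0 < p) (f : ℕ → ℕ) (hf : MM.IsPartition f)
    (hN : ∀ i, N ≤ i → f i = 0) (F : ℤ → ℂ) :
    Matrix.det (fun I J : Fin N =>
        if (p : ℤ) ∣ ((f I : ℤ) + (J : ℤ) - (I : ℤ)) then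
          F (((f I : ℤ) + (J : ℤ) - (I : ℤ)) / p)
        else 0) =
      (MM.psign f p : ℂ) *
        ∏ μ ∈ Finset.range p,
          Matrix.det (fun i j : Fin ((((N : ℤ) - (μ : ℤ) - 1).fdiv p + 1).toNat) =>
            F ((MM.pquot f p μ i : ℤ) + (j : ℤ) - (i : ℤ))) := by
  by_cases hbal : MM.IsBalanced f p N
  · exact MM.det_quotMatrix_of_isBalanced hf hN hp hbal F
  · obtain ⟨⟨μ, hμ, hover⟩, ν, hν, hunder⟩ := MM.exists_overfull_and_underfull hp hbal
    rw [MM.psign_eq_zero hf hN hp hμ hν hover hunder, Int.cast_zero, zero_mul]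
    exact MM.det_quotMatrix_eq_zero hp F hμ hover
end

section
/- Projection of the Vandermonde: with P_a f(x) = (1/r)∑_{j=0}^{r−1} ω_r^{−ja} f(ω_r^j x) applied in each variable, P_{a_1,…,a_N} ∏_{I>J}(x_I − x_J) = δ_{a_1,…,a_N} ∏_I x_I^{a_I mod r} ∏_{μ=0}^{r−1} ∏_{i>j} (x_{I_{μ,i}}^r − x_{I_{μ,j}}^r), where I_{μ,i} is the i-th index I with a_I ≡ μ (mod r), and δ_{a_1,…,a_N} is the sign of the map σ(I_{μ,i}) = 1 + r(i−1) + μ if it is a permutation of {1,…,N}, and 0 otherwise. -/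
open MvPolynomial

/-- the combined projection P_{a_1,…,a_N}, applying
P_{a_I} f(x) = (1/r) ∑_j ω_r^{-j a_I} f(ω_r^j x) in the variable x_I for each I. -/
noncomputable def proj (r N : ℕ) (a : Fin N → ℤ) (f : MvPolynomial (Fin N) ℂ) :
    MvPolynomial (Fin N) ℂ :=
  C (1 / (r : ℂ) ^ N) *
    ∑ j : Fin N → Fin r,
      C (∏ I : Fin N, omegaR r ^ (-(j I : ℤ) * a I)) *
        aeval (fun I => (C (omegaR r ^ (j I : ℕ)) * X I : MvPolynomial (Fin N) ℂ)) f

/-- the sign δ_{a_1,…,a_N}: the sign of the map σ(I_{μ,i}) = 1 + r(i−1) + μ (with I_{μ,i} the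
i-th index I with a_I ≡ μ mod r) if it is a permutation of {1,…,N}, and 0 otherwise. -/
noncomputable def deltaA (r N : ℕ) (a : Fin N → ℤ) : ℂ :=
  letI := Classical.propDecidable
  let s : Fin N → ℕ := fun I =>
    r * (Finset.univ.filter fun J : Fin N => J ≤ I ∧ a J % r = a I % r).card - r
      + (a I % r).toNat
  if h : ∀ I, s I < N then
    if hb : Function.Bijective (fun I : Fin N => (⟨s I, h I⟩ : Fin N)) then
      ((Equiv.Perm.sign (Equiv.ofBijective _ hb) : ℤ) : ℂ)
    else 0
  else 0

/-! Expanding the Vandermonde determinant `det (x_I ^ k)` by Leibniz, every term is a monomial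
`∏ x_I ^ e_I`, and by orthogonality of the `r`-th roots of unity `P_a` keeps it if
`e_I ≡ a_I (mod r)` for all `I` and kills it otherwise. So the projection is the determinant of the
matrix with entries `x_I ^ k` if `k ≡ a_I` and `0` otherwise.

A nonvanishing Leibniz term matches, within each residue class `μ`, the rows `I` with `a_I ≡ μ`
injectively to the columns `k ≡ μ`; hence `σ` takes values below `N` and is a bijection, and if it
does not, every term vanishes. Permuting the columns by `σ` makes the matrix block diagonal along
the residue classes, each block being `diag (x_I ^ (a_I mod r))` times a Vandermonde matrix in the
`x_I ^ r`. -/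

open Finset

theorem IsPrimitiveRoot.sum_zpow_mul {K : Type*} [Field K] {ζ : K} {r : ℕ}
    (hζ : IsPrimitiveRoot ζ r) (m : ℤ) :
    ∑ t : Fin r, ζ ^ ((t : ℤ) * m) = if (r : ℤ) ∣ m then (r : K) else 0 := by
  have hpow : ∀ t : Fin r, ζ ^ ((t : ℤ) * m) = (ζ ^ m) ^ (t : ℕ) := fun t => by
    rw [mul_comm, zpow_mul, zpow_natCast]
  simp only [hpow, Fin.sum_univ_eq_sum_range (fun i => (ζ ^ m) ^ i)]
  split_ifs with hdvd
  · simp [(hζ.zpow_eq_one_iff_dvd m).mpr hdvd]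
  · have hne : ζ ^ m - 1 ≠ 0 := sub_ne_zero.mpr fun h => hdvd ((hζ.zpow_eq_one_iff_dvd m).mp h)
    have hroot : (ζ ^ m) ^ r = 1 := by
      rw [← zpow_natCast, ← zpow_mul, mul_comm, zpow_mul, zpow_natCast, hζ.pow_eq_one, one_zpow]
    have hgeom := mul_geom_sum (ζ ^ m) r
    rw [hroot, sub_self] at hgeom
    exact (mul_eq_zero.mp hgeom).resolve_left hne

theorem isPrimitiveRoot_omegaR {r : ℕ} (hr : 0 < r) : IsPrimitiveRoot (omegaR r) r :=
  Complex.isPrimitiveRoot_exp r hr.ne'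

noncomputable def projLinearMap (r N : ℕ) (a : Fin N → ℤ) :
    MvPolynomial (Fin N) ℂ →ₗ[ℂ] MvPolynomial (Fin N) ℂ where
  toFun := proj r N a
  map_add' f g := by simp only [proj, map_add, mul_add, sum_add_distrib]
  map_smul' c f := by
    simp only [proj, smul_eq_C_mul, map_mul, aeval_C, mul_sum, RingHom.id_apply, algebraMap_eq]
    exact sum_congr rfl fun _ _ => by ring

section Projection

variable {r N : ℕ}

theorem one_var_proj_X_pow (hr : 0 < r) (b : ℤ) (I : Fin N) (e : ℕ) :
    C (1 / (r : ℂ)) * ∑ t : Fin r, C (omegaR r ^ (-(t : ℤ) * b)) * (C (omegaR r ^ (t : ℕ)) * X I) ^ e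
      = if (e : ℤ) ≡ b [ZMOD r] then X I ^ e else 0 := by
  have hω : omegaR r ≠ 0 := Complex.exp_ne_zero _
  have hsum : ∑ t : Fin r, C (omegaR r ^ (-(t : ℤ) * b)) * (C (omegaR r ^ (t : ℕ)) * X I) ^ e
      = C (∑ t : Fin r, omegaR r ^ ((t : ℤ) * (e - b))) * (X I : MvPolynomial (Fin N) ℂ) ^ e := by
    rw [map_sum, sum_mul]
    refine sum_congr rfl fun t _ => ?_
    rw [mul_pow, ← C_pow, ← mul_assoc, ← map_mul, ← zpow_natCast, ← zpow_natCast, ← zpow_mul,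
      ← zpow_add₀ hω]
    ring_nf
  have hrC : (r : ℂ) ≠ 0 := Nat.cast_ne_zero.mpr hr.ne'
  rw [hsum, (isPrimitiveRoot_omegaR hr).sum_zpow_mul, ← mul_assoc, ← map_mul]
  by_cases h : (e : ℤ) ≡ b [ZMOD r]
  · rw [if_pos (Int.modEq_iff_dvd.mp h.symm), if_pos h, one_div_mul_cancel hrC, map_one, one_mul]
  · rw [if_neg fun hd => h (Int.modEq_iff_dvd.mpr hd).symm, if_neg h, mul_zero, map_zero, zero_mul]

theorem proj_prod_X_pow (hr : 0 < r) (a : Fin N → ℤ) (e : Fin N → ℕ) :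
    proj r N a (∏ I, X I ^ e I) = ∏ I, if (e I : ℤ) ≡ a I [ZMOD r] then X I ^ e I else 0 := by
  simp only [← one_var_proj_X_pow hr, prod_mul_distrib, prod_const, card_univ, Fintype.card_fin,
    Fintype.prod_sum]
  rw [proj, ← C_pow, one_div_pow]
  congr 1
  exact sum_congr rfl fun j _ => by simp only [map_prod, map_pow, aeval_X]

end Projection

theorem card_filter_le_and {ι : Type*} [Fintype ι] [LinearOrder ι] {p : ι → Prop}
    [DecidablePred p] {i : ι} (hi : p i) : #{j | j ≤ i ∧ p j} = #{j | j < i ∧ p j} + 1 := by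
  rw [← card_insert_of_notMem (s := {j | j < i ∧ p j}) (a := i) (by simp)]
  congr 1
  ext j
  simp only [mem_filter, mem_univ, true_and, mem_insert, le_iff_lt_or_eq]
  constructor
  · rintro ⟨hj | rfl, hp⟩ <;> simp_all
  · rintro (rfl | ⟨hj, hp⟩) <;> simp_all

theorem card_filter_lt_and_lt_of_lt {ι : Type*} [Fintype ι] [LinearOrder ι] {p : ι → Prop}
    [DecidablePred p] {i j : ι} (hij : i < j) (hi : p i) :
    #{k | k < i ∧ p k} < #{k | k < j ∧ p k} := by
  refine card_lt_card ⟨fun k hk => ?_, fun hsub => ?_⟩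
  · simp only [mem_filter, mem_univ, true_and] at hk ⊢
    exact ⟨hk.1.trans hij, hk.2⟩
  · have := hsub (by simp [hij, hi] : i ∈ ({k | k < j ∧ p k} : Finset ι))
    simp at this

theorem card_filter_lt_and_eq_card_filter_lt_subtype {ι α : Type*} [Fintype ι] [LinearOrder ι]
    [DecidableEq α] (c : ι → α) {ν : α} (j : {i // c i = ν}) :
    #{k | k < (j : ι) ∧ c k = ν} = #{k | k < j} := by
  rw [← card_map (Function.Embedding.subtype _)]
  congr 1
  ext k
  simp only [mem_map, mem_filter, mem_univ, true_and, Function.Embedding.coe_subtype]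
  exact ⟨fun ⟨hk, hc⟩ => ⟨⟨k, hc⟩, hk, rfl⟩, fun ⟨l, hl, hlk⟩ => hlk ▸ ⟨hl, l.2⟩⟩

theorem prod_filter_snd_lt {κ M : Type*} [Fintype κ] [LinearOrder κ] [CommMonoid M]
    (g : κ → κ → M) : ∏ q : κ × κ with q.2 < q.1, g q.1 q.2 = ∏ i, ∏ j with i < j, g j i := by
  simp only [prod_filter, Fintype.prod_prod_type]
  exact prod_comm

theorem prod_filter_snd_lt_subtype {ι α M : Type*} [Fintype ι] [LinearOrder ι] [DecidableEq α]
    [CommMonoid M] (c : ι → α) (ν : α) (g : ι → ι → M) :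
    ∏ p : {i // c i = ν} × {i // c i = ν} with p.2 < p.1, g p.1 p.2
      = ∏ q : ι × ι with (q.2 < q.1 ∧ c q.1 = c q.2) ∧ c q.1 = ν, g q.1 q.2 := by
  refine (prod_map _ ((Function.Embedding.subtype _).prodMap (Function.Embedding.subtype _))
    fun q => g q.1 q.2).symm.trans ?_
  congr 1
  ext ⟨i, j⟩
  simp only [mem_map, mem_filter, mem_univ, true_and, Prod.exists, Function.Embedding.coe_prodMap,
    Function.Embedding.coe_subtype, Prod.map, Prod.mk.injEq]
  constructor
  · rintro ⟨⟨i, hi⟩, ⟨j, hj⟩, hlt, rfl, rfl⟩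
    exact ⟨⟨hlt, hi.trans hj.symm⟩, hi⟩
  · rintro ⟨⟨hlt, hij⟩, hi⟩
    exact ⟨⟨i, hi⟩, ⟨j, hij ▸ hi⟩, hlt, rfl, rfl⟩

section Vandermonde

open Matrix

variable {R : Type*} [CommRing R]

theorem det_vandermonde_linearOrder {κ : Type*} [Fintype κ] [LinearOrder κ] (v : κ → R) :
    (of fun i j => v i ^ #{k | k < j}).det = ∏ q : κ × κ with q.2 < q.1, (v q.1 - v q.2) := by
  let e := Fintype.orderIsoFinOfCardEq κ rfl
  have hrank : ∀ j, #{k | k < e j} = j := fun j => by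
    rw [← Fin.card_Iio, ← card_map e.toEquiv.toEmbedding]
    congr 1
    ext k
    simp [← e.symm_apply_lt]
  have hV : (of fun i j => v i ^ #{k | k < j}).submatrix e.toEquiv e.toEquiv
      = vandermonde (v ∘ e) := by
    ext i j
    simp [hrank]
  rw [← det_submatrix_equiv_self e.toEquiv, hV, det_vandermonde,
    prod_filter_snd_lt (fun i j => v i - v j), ← e.toEquiv.prod_comp]
  exact prod_congr rfl fun i _ => prod_equiv e.toEquiv (fun j => by simp) fun j _ => rfl

theorem det_vandermonde_coloring {ι α : Type*} [Fintype ι] [LinearOrder ι] [LinearOrder α]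
    (c : ι → α) (u v : ι → R) :
    (of fun i j => if c i = c j then u i * v i ^ #{k | k < j ∧ c k = c j} else 0).det
      = (∏ i, u i) * ∏ q : ι × ι with q.2 < q.1 ∧ c q.1 = c q.2, (v q.1 - v q.2) := by
  set M : Matrix ι ι R :=
    of fun i j => if c i = c j then u i * v i ^ #{k | k < j ∧ c k = c j} else 0
  have hM : M.BlockTriangular c := fun i j hij => if_neg (ne_of_gt hij)
  have hblock : ∀ ν, (M.toSquareBlock c ν).det = (∏ i : {i // c i = ν}, u i) *
      ∏ q : ι × ι with (q.2 < q.1 ∧ c q.1 = c q.2) ∧ c q.1 = ν, (v q.1 - v q.2) := fun ν => by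
    have hB : M.toSquareBlock c ν = of fun i j : {i // c i = ν} => u i * v i ^ #{k | k < j} := by
      ext i j
      simp [M, toSquareBlock, toSquareBlockProp, i.2, j.2,
        card_filter_lt_and_eq_card_filter_lt_subtype]
    rw [hB, ← prod_filter_snd_lt_subtype c ν fun i j => v i - v j,
      ← det_vandermonde_linearOrder fun i : {i // c i = ν} => v i]
    exact det_mul_column (fun i : {i // c i = ν} => u i) (of fun i j => v i ^ #{k | k < j})
  have hc : ∀ i ∈ (univ : Finset ι), c i ∈ univ.image c := fun i _ => mem_image_of_mem c (mem_univ i)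
  rw [hM.det, prod_congr rfl fun ν _ => hblock ν, prod_mul_distrib, ← prod_fiberwise_of_maps_to hc u,
    ← prod_fiberwise_of_maps_to (g := fun q : ι × ι => c q.1) fun q _ => hc q.1 (mem_univ _)]
  exact congrArg₂ _ (prod_congr rfl fun ν _ => (prod_subtype _ (by simp) _).symm)
    (prod_congr rfl fun ν _ => by rw [filter_filter])

end Vandermonde

theorem mul_add_lt_of_lt_card {r ν n t : ℕ} {S : Finset ℕ} (hS : ∀ k ∈ S, k < n ∧ k % r = ν)
    (ht : t < #S) : r * t + ν < n := by
  by_contra! hn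
  have hdiv : ∀ k ∈ S, k = r * (k / r) + ν := fun k hk => by rw [← (hS k hk).2, Nat.div_add_mod]
  have hmaps : ∀ k ∈ S, k / r ∈ range t := fun k hk => by
    have hkn := (hS k hk).1
    have hk := hdiv k hk
    rw [mem_range]
    by_contra! h
    nlinarith [Nat.mul_le_mul_left r h]
  have hinj : Set.InjOn (· / r) S := fun k hk l hl (hkl : k / r = l / r) => by
    rw [hdiv k hk, hdiv l hl, hkl]
  have := card_le_card_of_injOn _ hmaps hinj
  rw [card_range] at this
  omega

section Residue

open Matrix

/-- The paper's `σ(I_{μ,i}) = 1 + r (i - 1) + μ`, shifted to count from `0`. -/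
def residuePos {N : ℕ} (r : ℕ) (a : Fin N → ℤ) (I : Fin N) : ℕ :=
  r * #{J | J < I ∧ a J % r = a I % r} + (a I % r).toNat

def residueVandermonde {N : ℕ} {R : Type*} [CommRing R] (r : ℕ) (a : Fin N → ℤ) (v : Fin N → R) :
    Matrix (Fin N) (Fin N) R :=
  of fun I k => if ((k : ℕ) : ℤ) ≡ a I [ZMOD r] then v I ^ (k : ℕ) else 0

variable {N r : ℕ} (a : Fin N → ℤ)

theorem residuePos_modEq (hr : 0 < r) (I : Fin N) : (residuePos r a I : ℤ) ≡ a I [ZMOD r] := by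
  have hnonneg := Int.emod_nonneg (a I) (Int.natCast_ne_zero.mpr hr.ne')
  rw [Int.ModEq, residuePos, Nat.cast_add, Nat.cast_mul, Int.toNat_of_nonneg hnonneg,
    Int.mul_add_emod_self_left, Int.emod_emod]

theorem residuePos_injective (hr : 0 < r) : Function.Injective (residuePos r a) := by
  intro I J hIJ
  have hres : a I % r = a J % r :=
    (residuePos_modEq a hr I).symm.trans (hIJ ▸ residuePos_modEq a hr J)
  rw [residuePos, residuePos, hres] at hIJ
  have hrank := Nat.eq_of_mul_eq_mul_left hr (Nat.add_right_cancel hIJ)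
  by_contra hne
  rcases lt_or_gt_of_ne hne with hlt | hlt
  · exact (card_filter_lt_and_lt_of_lt (p := fun K => a K % r = a J % r) hlt hres).ne hrank
  · exact (card_filter_lt_and_lt_of_lt (p := fun K => a K % r = a J % r) hlt rfl).ne' hrank

theorem residuePos_bijective (hr : 0 < r) (h : ∀ I, residuePos r a I < N) :
    Function.Bijective fun I => (⟨residuePos r a I, h I⟩ : Fin N) :=
  Finite.injective_iff_bijective.mp fun _ _ hIJ => residuePos_injective a hr (Fin.val_eq_of_eq hIJ)

noncomputable def residuePerm (hr : 0 < r) (h : ∀ I, residuePos r a I < N) : Equiv.Perm (Fin N) :=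
  Equiv.ofBijective _ (residuePos_bijective a hr h)

theorem deltaA_eq (hr : 0 < r) : deltaA r N a =
    if h : ∀ I, residuePos r a I < N then ((Equiv.Perm.sign (residuePerm a hr h) : ℤ) : ℂ)
    else 0 := by
  -- `deltaA` is elaborated with classical decidability, so its filter has to be stated that way.
  have hpos : ∀ I, (letI := Classical.propDecidable
      r * #{J | J ≤ I ∧ a J % r = a I % r} - r + (a I % r).toNat) = residuePos r a I := fun I => by
    rw [filter_congr_decidable, card_filter_le_and (p := fun J => a J % r = a I % r) rfl,
      residuePos, Nat.mul_succ, Nat.add_sub_cancel]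
  unfold deltaA
  simp only [hpos]
  split_ifs with h hb
  · congr!
  · exact absurd (residuePos_bijective a hr h) hb
  · rfl

theorem residuePos_lt_of_perm (σ : Equiv.Perm (Fin N))
    (hσ : ∀ i : Fin N, ((i : ℕ) : ℤ) ≡ a (σ i) [ZMOD r]) (I : Fin N) : residuePos r a I < N := by
  set S := ({J | J ≤ I ∧ a J % r = a I % r} : Finset (Fin N)).image fun J => (σ.symm J : ℕ)
    with hSdef
  have hS : ∀ k ∈ S, k < N ∧ k % r = (a I % r).toNat := by
    simp only [S, mem_image, mem_filter, mem_univ, true_and]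
    rintro _ ⟨J, ⟨-, hJ⟩, rfl⟩
    have hk := hσ (σ.symm J)
    rw [Equiv.apply_symm_apply, Int.ModEq, hJ, ← Int.natCast_mod] at hk
    exact ⟨(σ.symm J).isLt, by rw [← hk, Int.toNat_natCast]⟩
  have hcard : #{J | J < I ∧ a J % r = a I % r} < #S := by
    rw [hSdef, card_image_of_injective _ fun J K hJK => σ.symm.injective (Fin.ext hJK),
      card_filter_le_and (p := fun J => a J % r = a I % r) rfl]
    exact Nat.lt_succ_self _
  exact mul_add_lt_of_lt_card hS hcard

variable {R : Type*} [CommRing R]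

theorem det_residueVandermonde_of_not_lt (v : Fin N → R) (h : ¬ ∀ I, residuePos r a I < N) :
    (residueVandermonde r a v).det = 0 := by
  rw [det_apply]
  refine sum_eq_zero fun σ _ => ?_
  obtain ⟨i, hi⟩ : ∃ i : Fin N, ¬ ((i : ℕ) : ℤ) ≡ a (σ i) [ZMOD r] := by
    by_contra! hσ
    exact h (residuePos_lt_of_perm a σ hσ)
  rw [prod_eq_zero (mem_univ i) (if_neg hi), smul_zero]

theorem det_residueVandermonde_of_lt (hr : 0 < r) (v : Fin N → R)
    (h : ∀ I, residuePos r a I < N) :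
    (residueVandermonde r a v).det = Equiv.Perm.sign (residuePerm a hr h) *
      ((∏ I, v I ^ (a I % r).toNat) *
        ∏ q : Fin N × Fin N with q.2 < q.1 ∧ a q.1 % r = a q.2 % r, (v q.1 ^ r - v q.2 ^ r)) := by
  set σ := residuePerm a hr h
  have hcol : (residueVandermonde r a v).submatrix id σ = of fun I J =>
      if a I % r = a J % r then
        v I ^ (a I % r).toNat * (v I ^ r) ^ #{K | K < J ∧ a K % r = a J % r}
      else 0 := by
    ext I J
    have hσJ : (σ J : ℕ) = residuePos r a J := rfl
    have hmod : (residuePos r a J : ℤ) ≡ a I [ZMOD r] ↔ a I % r = a J % r :=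
      ⟨fun hJ => ((residuePos_modEq a hr J).symm.trans hJ).symm,
        fun hIJ => (residuePos_modEq a hr J).trans hIJ.symm⟩
    simp only [submatrix_apply, residueVandermonde, of_apply, id, hσJ, hmod]
    split_ifs with hIJ
    · rw [residuePos, ← hIJ, pow_add, pow_mul, mul_comm]
    · rfl
  have hsign : ((Equiv.Perm.sign σ : ℤ) : R) * (Equiv.Perm.sign σ : ℤ) = 1 := by
    rw [← Int.cast_mul, ← Units.val_mul, Int.units_mul_self, Units.val_one, Int.cast_one]
  rw [← det_vandermonde_coloring (fun I => a I % r) (fun I => v I ^ (a I % r).toNat) (v · ^ r),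
    ← hcol, det_permute', ← mul_assoc, hsign, one_mul]

end Residue

theorem proj_vandermonde {r N : ℕ} (hr : 0 < r) (a : Fin N → ℤ) :
    proj r N a (∏ q : Fin N × Fin N with q.2 < q.1, (X q.1 - X q.2))
      = (residueVandermonde r a X).det := by
  have hrank : ∀ j : Fin N, #{k | k < j} = j := fun j => by rw [filter_gt_eq_Iio, Fin.card_Iio]
  rw [← det_vandermonde_linearOrder, Matrix.det_apply, Matrix.det_apply]
  change projLinearMap r N a _ = _
  rw [map_sum]
  refine sum_congr rfl fun σ _ => ?_
  rw [Units.smul_def, Units.smul_def, map_zsmul]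
  congr 1
  have hperm : ∏ i, (X (σ i) : MvPolynomial (Fin N) ℂ) ^ (i : ℕ) = ∏ I, X I ^ (σ.symm I : ℕ) :=
    Fintype.prod_equiv σ _ _ fun i => by rw [σ.symm_apply_apply]
  simp only [Matrix.of_apply, hrank, hperm]
  refine (proj_prod_X_pow hr a _).trans ?_
  exact (Fintype.prod_equiv σ _ _ fun i => by rw [σ.symm_apply_apply]; rfl).symm

/-- projection of the Vandermonde factors into r non-interacting blocks. -/
theorem vandermonde_projection (r N : ℕ) (hr : 0 < r) (a : Fin N → ℤ) :
    proj r N a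
        (∏ q ∈ Finset.univ.filter (fun q : Fin N × Fin N => q.2 < q.1), (X q.1 - X q.2)) =
      C (deltaA r N a) * (∏ I : Fin N, X I ^ (a I % r).toNat) *
        ∏ q ∈ Finset.univ.filter
            (fun q : Fin N × Fin N => q.2 < q.1 ∧ a q.1 % r = a q.2 % r),
          (X q.1 ^ r - X q.2 ^ r) := by
  rw [proj_vandermonde hr, deltaA_eq a hr]
  split_ifs with h
  · rw [det_residueVandermonde_of_lt a hr X h, map_intCast, mul_assoc]
  · rw [det_residueVandermonde_of_not_lt a X h, map_zero, zero_mul, zero_mul]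
end

section
/- A partition λ is a p-core (i.e., equals its own p-core) if and only if no box of λ has hook-length divisible by p. -/
open Set

namespace PC

/-- greatest element characterizes sSup in ℤ -/
lemma sSup_eq_of_greatest {S : Set ℤ} {m : ℤ} (hm : m ∈ S) (hub : ∀ w ∈ S, w ≤ m) :
    sSup S = m :=
  le_antisymm (csSup_le ⟨m, hm⟩ hub) (le_csSup ⟨m, hub⟩ hm)

/-- A "good" Maya-like set: contains all sufficiently small integers, bounded above. -/
def Good (T : Set ℤ) : Prop :=
  (∃ a, ∀ z : ℤ, z ≤ a → z ∈ T) ∧ (∃ b, ∀ z ∈ T, z ≤ b)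

lemma Good.nonempty {T : Set ℤ} (h : Good T) : T.Nonempty := by
  obtain ⟨a, ha⟩ := h.1; exact ⟨a, ha a le_rfl⟩

lemma Good.bddAbove {T : Set ℤ} (h : Good T) : BddAbove T := by
  obtain ⟨b, hb⟩ := h.2; exact ⟨b, fun z hz => hb z hz⟩

lemma Good.finite_above {T : Set ℤ} (h : Good T) (z : ℤ) :
    {w | w ∈ T ∧ z < w}.Finite := by
  obtain ⟨b, hb⟩ := h.2
  exact (Set.finite_Icc z b).subset (fun w hw => ⟨le_of_lt hw.2, hb w hw.1⟩)

lemma Good.finite_holes {T : Set ℤ} (h : Good T) (z : ℤ) :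
    {t | t ∉ T ∧ t < z}.Finite := by
  obtain ⟨a, ha⟩ := h.1
  refine (Set.finite_Icc a z).subset (fun t ht => ⟨?_, le_of_lt ht.2⟩)
  by_contra hc
  exact ht.1 (ha t (le_of_lt (lt_of_not_ge hc)))

noncomputable def enum (T : Set ℤ) : ℕ → ℤ
  | 0 => sSup T
  | n+1 => sSup (T ∩ Iio (enum T n))

lemma enum_zero_mem {T : Set ℤ} (h : Good T) : enum T 0 ∈ T :=
  Int.csSup_mem h.nonempty h.bddAbove

lemma enum_zero_greatest {T : Set ℤ} (h : Good T) : ∀ w ∈ T, w ≤ enum T 0 :=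
  fun _ hw => le_csSup h.bddAbove hw

lemma inter_Iio_nonempty {T : Set ℤ} (h : Good T) (z : ℤ) : (T ∩ Iio z).Nonempty := by
  obtain ⟨a, ha⟩ := h.1
  exact ⟨min a (z-1), ha _ (min_le_left _ _), by simp only [mem_Iio]; omega⟩

lemma enum_succ_mem {T : Set ℤ} (h : Good T) (n : ℕ) :
    enum T (n+1) ∈ T ∧ enum T (n+1) < enum T n := by
  have : enum T (n+1) ∈ T ∩ Iio (enum T n) :=
    Int.csSup_mem (inter_Iio_nonempty h _) (h.bddAbove.mono inter_subset_left)
  exact ⟨this.1, this.2⟩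

lemma enum_succ_greatest {T : Set ℤ} (h : Good T) (n : ℕ) :
    ∀ w ∈ T, w < enum T n → w ≤ enum T (n+1) :=
  fun w hw hlt => le_csSup (h.bddAbove.mono inter_subset_left) ⟨hw, hlt⟩

lemma enum_mem {T : Set ℤ} (h : Good T) (n : ℕ) : enum T n ∈ T := by
  cases n with
  | zero => exact enum_zero_mem h
  | succ n => exact (enum_succ_mem h n).1

lemma enum_strictAnti {T : Set ℤ} (h : Good T) : StrictAnti (enum T) :=
  strictAnti_nat_of_succ_lt (fun n => (enum_succ_mem h n).2)

noncomputable def rk (T : Set ℤ) (z : ℤ) : ℕ := {w | w ∈ T ∧ z < w}.ncard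

lemma rk_enum {T : Set ℤ} (h : Good T) (n : ℕ) : rk T (enum T n) = n := by
  induction n with
  | zero =>
    have : {w | w ∈ T ∧ enum T 0 < w} = ∅ := by
      ext w
      simp only [mem_setOf_eq, mem_empty_iff_false, iff_false, not_and, not_lt]
      exact fun hw => enum_zero_greatest h w hw
    simp [rk, this]
  | succ n ih =>
    have hset : {w | w ∈ T ∧ enum T (n+1) < w} = insert (enum T n) {w | w ∈ T ∧ enum T n < w} := by
      ext w
      simp only [mem_setOf_eq, mem_insert_iff]
      constructor
      · rintro ⟨hw, hlt⟩
        rcases lt_trichotomy w (enum T n) with h1 | h1 | h1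
        · exact absurd (enum_succ_greatest h n w hw h1) (not_le.mpr hlt)
        · exact Or.inl h1
        · exact Or.inr ⟨hw, h1⟩
      · rintro (rfl | ⟨hw, hlt⟩)
        · exact ⟨enum_mem h n, (enum_succ_mem h n).2⟩
        · exact ⟨hw, lt_trans (enum_succ_mem h n).2 hlt⟩
    have hnm : enum T n ∉ {w | w ∈ T ∧ enum T n < w} := by
      simp only [mem_setOf_eq]; exact fun hc => lt_irrefl _ hc.2
    unfold rk at ih ⊢
    rw [hset, Set.ncard_insert_of_notMem hnm (h.finite_above _), ih]

lemma rk_lt {T : Set ℤ} (h : Good T) {z w : ℤ} (hw : w ∈ T) (hzw : z < w) :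
    rk T w < rk T z := by
  have hsub : insert w {x | x ∈ T ∧ w < x} ⊆ {x | x ∈ T ∧ z < x} := by
    rintro x (rfl | ⟨hx, hlt⟩)
    · exact ⟨hw, hzw⟩
    · exact ⟨hx, lt_trans hzw hlt⟩
  have hnm : w ∉ {x | x ∈ T ∧ w < x} := fun hc => lt_irrefl _ hc.2
  have := Set.ncard_le_ncard hsub (h.finite_above z)
  rw [Set.ncard_insert_of_notMem hnm (h.finite_above _)] at this
  unfold rk
  omega

lemma eq_enum_rk {T : Set ℤ} (h : Good T) {z : ℤ} (hz : z ∈ T) : z = enum T (rk T z) := by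
  set n := rk T z with hn
  have he : enum T n ∈ T := enum_mem h n
  have hr : rk T (enum T n) = n := rk_enum h n
  rcases lt_trichotomy z (enum T n) with h1 | h1 | h1
  · have := rk_lt h he h1; omega
  · exact h1
  · have := rk_lt h hz h1; omega

lemma mem_iff_enum {T : Set ℤ} (h : Good T) {z : ℤ} : z ∈ T ↔ ∃ n, z = enum T n := by
  constructor
  · intro hz; exact ⟨rk T z, eq_enum_rk h hz⟩
  · rintro ⟨n, rfl⟩; exact enum_mem h n


open MM

lemma bead_eq_enum {T : Set ℤ} (h : Good T) (i : ℕ) : bead T i = enum T i := by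
  have hset : {z | z ∈ T ∧ {w | w ∈ T ∧ z < w}.ncard = i} = {enum T i} := by
    ext z
    simp only [mem_setOf_eq, mem_singleton_iff]
    constructor
    · rintro ⟨hz, hr⟩
      have : rk T z = i := hr
      rw [eq_enum_rk h hz, this]
    · rintro rfl
      exact ⟨enum_mem h i, rk_enum h i⟩
  rw [bead, hset, csSup_singleton]

noncomputable def hc (T : Set ℤ) (z : ℤ) : ℕ := {t | t ∉ T ∧ t < z}.ncard

lemma partOf_eq_hc {T : Set ℤ} (h : Good T) (i : ℕ) : partOf T i = hc T (enum T i) := by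
  unfold partOf hc
  rw [bead_eq_enum h]

lemma hc_sub {T : Set ℤ} (h : Good T) {z z' : ℤ} (hzz : z ≤ z') :
    (hc T z' : ℤ) = hc T z + (z' - z) - ({w | w ∈ T ∧ z ≤ w ∧ w < z'}.ncard : ℤ) := by
  have hA : {t | t ∉ T ∧ t < z'} = {t | t ∉ T ∧ t < z} ∪ {t | t ∉ T ∧ z ≤ t ∧ t < z'} := by
    ext t; simp only [mem_setOf_eq, mem_union]; constructor
    · rintro ⟨ht, hlt⟩
      rcases lt_or_ge t z with h1 | h1
      · exact Or.inl ⟨ht, h1⟩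
      · exact Or.inr ⟨ht, h1, hlt⟩
    · rintro (⟨ht, h1⟩ | ⟨ht, h1, h2⟩)
      · exact ⟨ht, lt_of_lt_of_le h1 hzz⟩
      · exact ⟨ht, h2⟩
  have hB : {x : ℤ | z ≤ x ∧ x < z'} = {t | t ∉ T ∧ z ≤ t ∧ t < z'} ∪ {w | w ∈ T ∧ z ≤ w ∧ w < z'} := by
    ext x; simp only [mem_setOf_eq, mem_union]
    constructor
    · rintro ⟨h1, h2⟩
      by_cases hx : x ∈ T
      · exact Or.inr ⟨hx, h1, h2⟩
      · exact Or.inl ⟨hx, h1, h2⟩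
    · rintro (⟨_, h1, h2⟩ | ⟨_, h1, h2⟩) <;> exact ⟨h1, h2⟩
  have hIcofin : ({x : ℤ | z ≤ x ∧ x < z'}).Finite := by
    exact (Set.finite_Icc z z').subset (fun x hx => ⟨hx.1, le_of_lt hx.2⟩)
  have hfin1 : {t | t ∉ T ∧ z ≤ t ∧ t < z'}.Finite :=
    hIcofin.subset (fun t ht => ⟨ht.2.1, ht.2.2⟩)
  have hfin2 : {w | w ∈ T ∧ z ≤ w ∧ w < z'}.Finite :=
    hIcofin.subset (fun t ht => ⟨ht.2.1, ht.2.2⟩)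
  have hIco : ({x : ℤ | z ≤ x ∧ x < z'}).ncard = (z' - z).toNat := by
    have : {x : ℤ | z ≤ x ∧ x < z'} = Set.Ico z z' := by ext x; simp [Set.mem_Ico]
    rw [this, ← Finset.coe_Ico, Set.ncard_coe_finset, Int.card_Ico]
  have hd1 : Disjoint {t | t ∉ T ∧ t < z} {t | t ∉ T ∧ z ≤ t ∧ t < z'} := by
    rw [Set.disjoint_left]; rintro t ⟨_, h1⟩ ⟨_, h2, _⟩; omega
  have hd2 : Disjoint {t | t ∉ T ∧ z ≤ t ∧ t < z'} {w | w ∈ T ∧ z ≤ w ∧ w < z'} := by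
    rw [Set.disjoint_left]; rintro t ⟨h1, _⟩ ⟨h2, _⟩; exact h1 h2
  have e1 : hc T z' = hc T z + {t | t ∉ T ∧ z ≤ t ∧ t < z'}.ncard := by
    unfold hc
    rw [hA, Set.ncard_union_eq hd1 (h.finite_holes z) hfin1]
  have e2 : (z' - z).toNat = {t | t ∉ T ∧ z ≤ t ∧ t < z'}.ncard + {w | w ∈ T ∧ z ≤ w ∧ w < z'}.ncard := by
    rw [← hIco, hB, Set.ncard_union_eq hd2 hfin1 hfin2]
  omega

lemma T_inter_step {T : Set ℤ} (h : Good T) (n : ℕ) :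
    {w | w ∈ T ∧ enum T (n+1) ≤ w ∧ w < enum T n} = {enum T (n+1)} := by
  ext w
  simp only [mem_setOf_eq, mem_singleton_iff]
  constructor
  · rintro ⟨hw, h1, h2⟩
    exact le_antisymm (enum_succ_greatest h n w hw h2) h1
  · rintro rfl
    exact ⟨enum_mem h (n+1), le_refl _, (enum_succ_mem h n).2⟩

lemma partOf_linear0 {T : Set ℤ} (h : Good T) :
    ∀ n, (partOf T n : ℤ) = enum T n + n + 1 + ((partOf T 0 : ℤ) - enum T 0 - 1) := by
  intro n
  induction n with
  | zero => push_cast; ring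
  | succ n ih =>
    have h1 := hc_sub h (le_of_lt (enum_succ_mem h n).2)
    rw [T_inter_step h n, Set.ncard_singleton] at h1
    rw [partOf_eq_hc h] at ih ⊢
    rw [partOf_eq_hc h] at ih ⊢
    push_cast at h1 ih ⊢
    omega

lemma enum_le_sub {T : Set ℤ} (h : Good T) (n : ℕ) : enum T n ≤ enum T 0 - n := by
  induction n with
  | zero => simp
  | succ n ih =>
    have := (enum_succ_mem h n).2
    push_cast
    omega

lemma hc_eq_zero {T : Set ℤ} {a : ℤ} (ha : ∀ z : ℤ, z ≤ a → z ∈ T) {z : ℤ} (hz : z ≤ a + 1) :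
    hc T z = 0 := by
  unfold hc
  convert Set.ncard_empty ℤ
  ext t
  simp only [mem_setOf_eq, mem_empty_iff_false, iff_false, not_and, not_lt]
  intro ht
  by_contra hc
  exact ht (ha t (by omega))

lemma partOf_eventually_zero {T : Set ℤ} (h : Good T) : ∃ N, ∀ n, N ≤ n → partOf T n = 0 := by
  obtain ⟨a, ha⟩ := h.1
  refine ⟨(enum T 0 - a - 1).toNat, fun n hn => ?_⟩
  rw [partOf_eq_hc h]
  refine hc_eq_zero ha ?_
  have h1 := enum_le_sub h n
  have h2 : (enum T 0 - a - 1) ≤ (n : ℤ) := le_trans (Int.self_le_toNat _) (by exact_mod_cast hn)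
  omega

lemma partOf_antitone {T : Set ℤ} (h : Good T) : Antitone (partOf T) := by
  refine antitone_nat_of_succ_le (fun n => ?_)
  rw [partOf_eq_hc h, partOf_eq_hc h]
  refine Set.ncard_le_ncard ?_ (h.finite_holes _)
  intro t ht
  exact ⟨ht.1, lt_trans ht.2 (enum_succ_mem h n).2⟩

lemma isPartition_partOf {T : Set ℤ} (h : Good T) : IsPartition (partOf T) :=
  ⟨partOf_antitone h, partOf_eventually_zero h⟩

lemma ncard_Iio_nat (n : ℕ) : (Set.Iio n).ncard = n := by
  rw [← Finset.coe_range, Set.ncard_coe_finset, Finset.card_range]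

lemma charge_eq {T : Set ℤ} (h : Good T) :
    charge T = -((partOf T 0 : ℤ) - enum T 0 - 1) := by
  classical
  have hex : ∃ n, enum T n < 0 := by
    refine ⟨(enum T 0 + 1).toNat, ?_⟩
    have h1 := enum_le_sub h (enum T 0 + 1).toNat
    have h2 : enum T 0 + 1 ≤ ((enum T 0 + 1).toNat : ℤ) := Int.self_le_toNat _
    omega
  set n₀ := Nat.find hex with hn₀
  have hneg : enum T n₀ < 0 := Nat.find_spec hex
  have hpos : ∀ m, m < n₀ → 0 ≤ enum T m := fun m hm => not_lt.mp (Nat.find_min hex hm)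
  have hP : {z | z ∈ T ∧ 0 ≤ z} = enum T '' (Set.Iio n₀) := by
    ext z
    simp only [mem_setOf_eq, mem_image, mem_Iio]
    constructor
    · rintro ⟨hz, h0⟩
      refine ⟨rk T z, ?_, (eq_enum_rk h hz).symm⟩
      by_contra hc
      push_neg at hc
      have : enum T (rk T z) ≤ enum T n₀ := (enum_strictAnti h).antitone hc
      rw [← eq_enum_rk h hz] at this
      omega
    · rintro ⟨m, hm, rfl⟩
      exact ⟨enum_mem h m, hpos m hm⟩
  have hPcard : {z | z ∈ T ∧ 0 ≤ z}.ncard = n₀ := by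
    rw [hP, Set.ncard_image_of_injective _ (enum_strictAnti h).injective, ncard_Iio_nat]
  have hQ : {z | z ∉ T ∧ z < 0}.ncard = hc T 0 := rfl
  have h1 := hc_sub h (le_of_lt hneg)
  have hstep : {w | w ∈ T ∧ enum T n₀ ≤ w ∧ w < 0} = {enum T n₀} := by
    ext w
    simp only [mem_setOf_eq, mem_singleton_iff]
    constructor
    · rintro ⟨hw, hge, hlt⟩
      have := eq_enum_rk h hw
      rcases lt_or_ge (rk T w) n₀ with hcase | hcase
      · have := hpos _ hcase; omega
      · have h2 : enum T (rk T w) ≤ enum T n₀ := (enum_strictAnti h).antitone hcase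
        omega
    · rintro rfl
      exact ⟨enum_mem h n₀, le_refl _, hneg⟩
  rw [hstep, Set.ncard_singleton] at h1
  have h2 := partOf_linear0 h n₀
  rw [partOf_eq_hc h] at h2
  unfold charge
  rw [hPcard, hQ]
  push_cast at h1 h2 ⊢
  omega

lemma partOf_linear {T : Set ℤ} (h : Good T) (n : ℕ) :
    (partOf T n : ℤ) = enum T n + n + 1 - charge T := by
  rw [charge_eq h, partOf_linear0 h n]; ring

lemma maya_partOf {T : Set ℤ} (h : Good T) (h0 : charge T = 0) : maya (partOf T) = T := by
  ext z
  unfold maya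
  simp only [mem_setOf_eq]
  constructor
  · rintro ⟨i, rfl⟩
    have := partOf_linear h i
    rw [h0] at this
    have hz : ((partOf T i : ℤ)) - i - 1 = enum T i := by omega
    rw [hz]
    exact enum_mem h i
  · intro hz
    refine ⟨rk T z, ?_⟩
    have := partOf_linear h (rk T z)
    rw [h0, ← eq_enum_rk h hz] at this
    omega

lemma enum_unique {T : Set ℤ} (h : Good T) {e : ℕ → ℤ} (he : StrictAnti e)
    (hr : ∀ z, z ∈ T ↔ ∃ n, z = e n) : ∀ n, e n = enum T n := by
  intro n
  induction n with
  | zero =>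
    show e 0 = sSup T
    refine (sSup_eq_of_greatest ((hr (e 0)).mpr ⟨0, rfl⟩) ?_).symm
    intro w hw
    obtain ⟨m, rfl⟩ := (hr w).mp hw
    exact he.antitone (Nat.zero_le m)
  | succ n ih =>
    show e (n+1) = sSup (T ∩ Iio (enum T n))
    have hmem : e (n+1) ∈ T ∩ Iio (enum T n) := by
      refine ⟨(hr _).mpr ⟨n+1, rfl⟩, ?_⟩
      rw [← ih]; exact he (Nat.lt_succ_self n)
    refine (sSup_eq_of_greatest hmem ?_).symm
    rintro w ⟨hw, hlt⟩
    obtain ⟨m, rfl⟩ := (hr _).mp hw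
    rw [← ih] at hlt
    have : n < m := by
      by_contra hc
      push_neg at hc
      exact absurd (he.antitone hc) (not_le.mpr hlt)
    exact he.antitone this

section Partition
variable {f : ℕ → ℕ}

/-- beta sequence -/
def beta (f : ℕ → ℕ) (i : ℕ) : ℤ := (f i : ℤ) - i - 1

lemma beta_strictAnti (hf : IsPartition f) : StrictAnti (beta f) := by
  refine strictAnti_nat_of_succ_lt (fun n => ?_)
  have : f (n+1) ≤ f n := hf.1 (Nat.le_succ n)
  unfold beta
  push_cast
  omega

lemma mem_maya_iff {z : ℤ} : z ∈ maya f ↔ ∃ i, z = beta f i := Iff.rfl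

lemma good_maya (hf : IsPartition f) : Good (maya f) := by
  obtain ⟨N, hN⟩ := hf.2
  constructor
  · refine ⟨-(N:ℤ) - 1, fun z hz => ?_⟩
    have h0 : (0:ℤ) ≤ -z - 1 := by omega
    refine ⟨(-z-1).toNat, ?_⟩
    have hi : ((-z-1).toNat : ℤ) = -z-1 := Int.toNat_of_nonneg h0
    have hNi : N ≤ (-z-1).toNat := by omega
    rw [hN _ hNi]
    omega
  · refine ⟨(f 0 : ℤ), ?_⟩
    rintro z ⟨i, rfl⟩
    have := hf.1 (Nat.zero_le i)
    push_cast
    omega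

lemma enum_maya (hf : IsPartition f) (i : ℕ) : enum (maya f) i = beta f i :=
  (enum_unique (good_maya hf) (beta_strictAnti hf) (fun _ => Iff.rfl) i).symm

lemma charge_maya (hf : IsPartition f) : charge (maya f) = 0 := by
  obtain ⟨N, hN⟩ := hf.2
  obtain ⟨N', hN'⟩ := partOf_eventually_zero (good_maya hf)
  have h := partOf_linear (good_maya hf) (max N N')
  rw [enum_maya hf] at h
  unfold beta at h
  rw [hN (max N N') (le_max_left _ _), hN' (max N N') (le_max_right _ _)] at h
  push_cast at h
  omega

lemma partOf_maya (hf : IsPartition f) : partOf (maya f) = f := by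
  funext n
  have h := partOf_linear (good_maya hf) n
  rw [enum_maya hf, charge_maya hf] at h
  unfold beta at h
  omega

/-- a finite downward-closed set of naturals is an initial segment -/
lemma downclosed_nat {S : Set ℕ} (hS : S.Finite) (hdc : ∀ a b : ℕ, a ≤ b → b ∈ S → a ∈ S) :
    S = Set.Iio S.ncard := by
  ext i
  simp only [mem_Iio]
  constructor
  · intro hi
    have hsub : Set.Iic i ⊆ S := fun a ha => hdc a i ha hi
    have h1 : (Set.Iic i).ncard ≤ S.ncard := Set.ncard_le_ncard hsub hS
    have h2 : (Set.Iic i).ncard = i + 1 := by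
      rw [← Finset.coe_Iic, Set.ncard_coe_finset, Nat.card_Iic]
    omega
  · intro hi
    by_contra hc
    have hsub : S ⊆ Set.Iio i := by
      intro b hb
      simp only [mem_Iio]
      by_contra hb2
      exact hc (hdc i b (not_lt.mp hb2) hb)
    have := Set.ncard_le_ncard hsub (Set.finite_Iio i)
    rw [ncard_Iio_nat] at this
    omega

lemma transpose_set (hf : IsPartition f) (j : ℕ) :
    {i | j < f i} = Set.Iio (transpose f j) := by
  obtain ⟨N, hN⟩ := hf.2
  have hfin : {i | j < f i}.Finite := by
    refine (Set.finite_Iio N).subset (fun i hi => ?_)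
    simp only [mem_setOf_eq] at hi
    simp only [mem_Iio]
    by_contra hc
    rw [hN i (not_lt.mp hc)] at hi
    exact Nat.not_lt_zero j hi
  exact downclosed_nat hfin (fun a b hab hb => lt_of_lt_of_le hb (hf.1 hab))

lemma lt_transpose_iff (hf : IsPartition f) {i j : ℕ} : j < f i ↔ i < transpose f j := by
  constructor
  · intro h
    have : i ∈ {i | j < f i} := h
    rw [transpose_set hf] at this
    exact this
  · intro h
    have : i ∈ Set.Iio (transpose f j) := h
    rw [← transpose_set hf] at this
    exact this

/-- hole positions -/
noncomputable def tpos (f : ℕ → ℕ) (j : ℕ) : ℤ := (j : ℤ) - transpose f j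

lemma transpose_antitone (hf : IsPartition f) : Antitone (transpose f) := by
  intro j j' hjj
  obtain ⟨N, hN⟩ := hf.2
  have hfin : {i | j < f i}.Finite := by
    rw [transpose_set hf]; exact Set.finite_Iio _
  exact Set.ncard_le_ncard (fun i hi => lt_of_le_of_lt hjj hi) hfin

lemma tpos_strictMono (hf : IsPartition f) : StrictMono (tpos f) := by
  refine strictMono_nat_of_lt_succ (fun n => ?_)
  have : transpose f (n+1) ≤ transpose f n := transpose_antitone hf (Nat.le_succ n)
  unfold tpos
  push_cast
  omega

lemma tpos_lt_beta (hf : IsPartition f) {i j : ℕ} (h : j < f i) : tpos f j < beta f i := by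
  have h1 : i < transpose f j := (lt_transpose_iff hf).mp h
  unfold tpos beta
  push_cast
  omega

lemma beta_lt_tpos (hf : IsPartition f) {i j : ℕ} (h : f i ≤ j) : beta f i < tpos f j := by
  have h1 : transpose f j ≤ i := by
    by_contra hc
    exact absurd ((lt_transpose_iff hf).mpr (not_le.mp hc)) (not_lt.mpr h)
  unfold tpos beta
  push_cast
  omega

lemma tpos_notMem (hf : IsPartition f) (j : ℕ) : tpos f j ∉ maya f := by
  rintro ⟨i, hi⟩
  change tpos f j = beta f i at hi
  rcases lt_or_ge j (f i) with h | h
  · exact absurd hi (ne_of_lt (tpos_lt_beta hf h))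
  · exact absurd hi.symm (ne_of_lt (beta_lt_tpos hf h))

lemma hole_eq_tpos (hf : IsPartition f) {z : ℤ} (hz : z ∉ maya f) : ∃ j, z = tpos f j := by
  classical
  set r := transpose f 0 with hr
  have hz0 : tpos f 0 ≤ z := by
    by_contra hc
    push_neg at hc
    unfold tpos at hc
    apply hz
    have h0 : (0:ℤ) ≤ -z - 1 := by push_cast at hc; omega
    set i := (-z-1).toNat with hi
    have hii : (i : ℤ) = -z-1 := Int.toNat_of_nonneg h0
    have hri : r ≤ i := by push_cast at hc; omega
    have hfi : f i = 0 := by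
      by_contra hfi
      have : i < r := (lt_transpose_iff hf).mp (Nat.pos_of_ne_zero hfi)
      omega
    exact ⟨i, by rw [hfi]; push_cast; omega⟩
  have hbdd : ∀ j : ℕ, tpos f j ≤ z → j ≤ (z + r).toNat := by
    intro j hj
    have h1 : transpose f j ≤ r := transpose_antitone hf (Nat.zero_le j)
    unfold tpos at hj
    have : (j : ℤ) ≤ z + r := by push_cast at hj ⊢; omega
    omega
  have hne : {j : ℕ | tpos f j ≤ z}.Nonempty := ⟨0, hz0⟩
  have hbd : BddAbove {j : ℕ | tpos f j ≤ z} := ⟨(z + r).toNat, fun j hj => hbdd j hj⟩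
  set j := sSup {j : ℕ | tpos f j ≤ z} with hj
  have hjmem : tpos f j ≤ z := Nat.sSup_mem hne hbd
  have hjsucc : z < tpos f (j+1) := by
    by_contra hc
    push_neg at hc
    have : j + 1 ≤ j := le_csSup hbd hc
    omega
  rcases eq_or_lt_of_le hjmem with heq | hlt
  · exact ⟨j, heq.symm⟩
  exfalso
  apply hz
  have hzj : z ≤ (j : ℤ) := by
    have h1 : transpose f (j+1) ≥ 0 := Nat.zero_le _
    unfold tpos at hjsucc
    push_cast at hjsucc
    omega
  set i := ((j : ℤ) - z).toNat with hi
  have hii : (i : ℤ) = (j : ℤ) - z := Int.toNat_of_nonneg (by omega)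
  have hup : f i ≥ j + 1 := by
    have h1 : (i : ℤ) < transpose f j := by
      unfold tpos at hlt; omega
    have h2 : i < transpose f j := by exact_mod_cast h1
    exact (lt_transpose_iff hf).mpr h2
  have hdn : f i ≤ j + 1 := by
    have h1 : (transpose f (j+1) : ℤ) ≤ (i : ℤ) := by
      unfold tpos at hjsucc; push_cast at hjsucc ⊢; omega
    have h2 : transpose f (j+1) ≤ i := by exact_mod_cast h1
    by_contra hcont
    have : i < transpose f (j+1) := (lt_transpose_iff hf).mp (by omega)
    omega
  refine ⟨i, ?_⟩
  change z = beta f i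
  unfold beta
  have : f i = j + 1 := le_antisymm hdn hup
  rw [this]
  push_cast
  omega

lemma hook_eq (f : ℕ → ℕ) (i j : ℕ) : hook f (i, j) = beta f i - tpos f j := by
  unfold hook beta tpos
  push_cast
  ring

end Partition

/-- no bead can slide down by a multiple of p -/
def NoSlide (p : ℕ) (T : Set ℤ) : Prop :=
  ∀ b ∈ T, ∀ u : ℤ, u ∉ T → u < b → ¬ ((p:ℕ) : ℤ) ∣ (b - u)

lemma hooks_iff_noslide {f : ℕ → ℕ} (hf : IsPartition f) (p : ℕ) :
    (∀ c ∈ cells f, ¬ ((p : ℕ) : ℤ) ∣ hook f c) ↔ NoSlide p (maya f) := by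
  constructor
  · intro H b hb u hu hub hdvd
    obtain ⟨i, hi⟩ := hb
    obtain ⟨j, hj⟩ := hole_eq_tpos hf hu
    have hbi : b = beta f i := hi
    have hji : j < f i := by
      by_contra hc
      have := beta_lt_tpos hf (not_lt.mp hc)
      omega
    refine H (i, j) hji ?_
    rw [hook_eq f i j, ← hbi, ← hj]
    exact hdvd
  · intro H c hc hdvd
    obtain ⟨i, j⟩ := c
    have hji : j < f i := hc
    refine H (beta f i) ⟨i, rfl⟩ (tpos f j) (tpos_notMem hf j) (tpos_lt_beta hf hji) ?_
    rw [← hook_eq f i j]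
    exact hdvd

/-- decomposition of an integer into column and height -/
lemma decomp {p : ℕ} (hp : 0 < p) (z : ℤ) :
    ∃ μ : ℕ, μ < p ∧ ∃ k : ℤ, z = (p:ℤ) * k - μ - 1 := by
  have hp' : (0:ℤ) < p := by exact_mod_cast hp
  set q := (-z-1) / p with hq
  set r := (-z-1) % p with hr
  have hr0 : 0 ≤ r := Int.emod_nonneg _ (ne_of_gt hp')
  have hrp : r < p := Int.emod_lt_of_pos _ hp'
  have hdiv : (p:ℤ) * q + r = -z-1 := Int.mul_ediv_add_emod _ _
  refine ⟨r.toNat, ?_, -q, ?_⟩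
  · omega
  · have : (r.toNat : ℤ) = r := Int.toNat_of_nonneg hr0
    rw [this]
    linear_combination hdiv

lemma decomp_unique {p : ℕ} (hp : 0 < p) {μ μ' : ℕ} {k k' : ℤ} (hμ : μ < p) (hμ' : μ' < p)
    (h : (p:ℤ) * k - μ - 1 = (p:ℤ) * k' - μ' - 1) : μ = μ' ∧ k = k' := by
  have hp' : (0:ℤ) < p := by exact_mod_cast hp
  have hd : (p:ℤ) * (k - k') = (μ:ℤ) - μ' := by linarith [h]
  have hμZ : (μ:ℤ) < p := by exact_mod_cast hμ
  have hμ'Z : (μ':ℤ) < p := by exact_mod_cast hμ'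
  have hkk : k = k' := by
    rcases lt_trichotomy k k' with h1 | h1 | h1
    · have h2 : k - k' ≤ -1 := by omega
      have : (p:ℤ) * (k - k') ≤ p * (-1) := by
        exact mul_le_mul_of_nonneg_left h2 (le_of_lt hp')
      have hμnn : (0:ℤ) ≤ μ := Int.ofNat_nonneg μ
      omega
    · exact h1
    · have h2 : (1:ℤ) ≤ k - k' := by omega
      have : (p:ℤ) * 1 ≤ p * (k - k') := by
        exact mul_le_mul_of_nonneg_left h2 (le_of_lt hp')
      have hμ'nn : (0:ℤ) ≤ μ' := Int.ofNat_nonneg μ'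
      omega
  refine ⟨?_, hkk⟩
  rw [hkk] at hd
  simp at hd
  omega

lemma col_good {p : ℕ} (hp : 0 < p) {T : Set ℤ} (hT : Good T) (μ : ℕ) :
    Good (col T p μ) := by
  have hp' : (1:ℤ) ≤ p := by exact_mod_cast hp
  obtain ⟨a, ha⟩ := hT.1
  obtain ⟨b, hb⟩ := hT.2
  constructor
  · refine ⟨min a 0, fun k hk => ?_⟩
    have hk0 : k ≤ 0 := le_trans hk (min_le_right _ _)
    have hka : k ≤ a := le_trans hk (min_le_left _ _)
    have h1 : (p:ℤ) * k ≤ 1 * k := mul_le_mul_of_nonpos_right hp' hk0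
    refine ha _ ?_
    have : (0:ℤ) ≤ μ := Int.ofNat_nonneg μ
    omega
  · refine ⟨max 0 (b + μ + 1), fun k hk => ?_⟩
    have h1 : (p:ℤ) * k - μ - 1 ≤ b := hb _ hk
    rcases le_or_gt k 0 with h2 | h2
    · exact le_trans h2 (le_max_left _ _)
    · have h3 : 1 * k ≤ (p:ℤ) * k := mul_le_mul_of_nonneg_right hp' (le_of_lt h2)
      refine le_trans ?_ (le_max_right _ _)
      omega

/-- down-closed set of integers -/
def DC (C : Set ℤ) : Prop := ∀ ⦃k' k : ℤ⦄, k' ≤ k → k ∈ C → k' ∈ C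

lemma noslide_iff_dc {p : ℕ} (hp : 0 < p) {T : Set ℤ} :
    NoSlide p T ↔ ∀ μ : ℕ, μ < p → DC (col T p μ) := by
  have hp' : (0:ℤ) < p := by exact_mod_cast hp
  constructor
  · intro H μ hμ k' k hkk hk
    rcases eq_or_lt_of_le hkk with rfl | hlt
    · exact hk
    by_contra hk'
    refine H ((p:ℤ) * k - μ - 1) hk ((p:ℤ) * k' - μ - 1) hk' ?_ ⟨k - k', by ring⟩
    have : (p:ℤ) * k' < p * k := by
      exact mul_lt_mul_of_pos_left hlt hp'
    omega
  · intro H b hb u hu hub hdvd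
    obtain ⟨d, hd⟩ := hdvd
    obtain ⟨μ, hμ, k, hk⟩ := decomp hp b
    have hu' : u = (p:ℤ) * (k - d) - μ - 1 := by
      rw [mul_sub]
      omega
    have hd0 : 0 ≤ d := by
      by_contra hc
      push_neg at hc
      have : (p:ℤ) * d ≤ p * 0 := mul_le_mul_of_nonneg_left (le_of_lt hc) (le_of_lt hp')
      omega
    have hkcol : k ∈ col T p μ := by
      show (p:ℤ) * k - μ - 1 ∈ T
      rw [← hk]; exact hb
    have := H μ hμ (by omega : k - d ≤ k) hkcol
    apply hu
    show u ∈ T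
    rw [hu']
    exact this

lemma charge_Iio (c : ℤ) : charge (Iio c) = c := by
  have h1 : {z | z ∈ Iio c ∧ 0 ≤ z} = Set.Ico (0:ℤ) c := by
    ext z; simp only [mem_setOf_eq, mem_Iio, Set.mem_Ico]; omega
  have h2 : {z | z ∉ Iio c ∧ z < 0} = Set.Ico c (0:ℤ) := by
    ext z; simp only [mem_setOf_eq, mem_Iio, Set.mem_Ico, not_lt]
  have h3 : (Set.Ico (0:ℤ) c).ncard = (c - 0).toNat := by
    rw [← Finset.coe_Ico, Set.ncard_coe_finset, Int.card_Ico]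
  have h4 : (Set.Ico c (0:ℤ)).ncard = (0 - c).toNat := by
    rw [← Finset.coe_Ico, Set.ncard_coe_finset, Int.card_Ico]
  unfold charge
  rw [h1, h2, h3, h4]
  omega

lemma dc_eq_Iio {C : Set ℤ} (hC : Good C) (hdc : DC C) : C = Iio (charge C) := by
  obtain ⟨a, ha⟩ := hC.1
  obtain ⟨b, hb⟩ := hC.2
  have hex : ∃ z : ℤ, z ∉ C := by
    refine ⟨b + 1, fun hc => ?_⟩
    have := hb _ hc
    omega
  have hbdd : ∃ lb : ℤ, ∀ z : ℤ, z ∉ C → lb ≤ z := by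
    refine ⟨a + 1, fun z hz => ?_⟩
    by_contra hc
    exact hz (ha z (by omega))
  obtain ⟨c, hc1, hc2⟩ := Int.exists_least_of_bdd hbdd hex
  have hCI : C = Iio c := by
    ext z
    simp only [mem_Iio]
    constructor
    · intro hz
      by_contra hzc
      exact hc1 (hdc (not_lt.mp hzc) hz)
    · intro hz
      by_contra hzC
      have := hc2 z hzC
      omega
  rw [hCI, charge_Iio]

lemma ncard_biUnion {ι α : Type*} (s : Finset ι) (F : ι → Set α)
    (hfin : ∀ i ∈ s, (F i).Finite)
    (hdisj : ∀ i ∈ s, ∀ j ∈ s, i ≠ j → Disjoint (F i) (F j)) :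
    (⋃ i ∈ s, F i).ncard = ∑ i ∈ s, (F i).ncard := by
  classical
  induction s using Finset.induction_on with
  | empty => simp
  | @insert a s hnot ih =>
    rw [Finset.set_biUnion_insert, Finset.sum_insert hnot]
    have hfinU : (⋃ i ∈ s, F i).Finite :=
      Set.Finite.biUnion s.finite_toSet (fun i hi => hfin i (Finset.mem_insert_of_mem hi))
    have hd : Disjoint (F a) (⋃ i ∈ s, F i) := by
      rw [Set.disjoint_left]
      intro x hxa hxU
      simp only [Set.mem_iUnion] at hxU
      obtain ⟨i, hi, hxi⟩ := hxU
      have hne : a ≠ i := fun h => hnot (h ▸ hi)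
      exact (Set.disjoint_left.mp (hdisj a (Finset.mem_insert_self a s) i
        (Finset.mem_insert_of_mem hi) hne)) hxa hxi
    rw [Set.ncard_union_eq hd (hfin a (Finset.mem_insert_self a s)) hfinU,
      ih (fun i hi => hfin i (Finset.mem_insert_of_mem hi))
        (fun i hi j hj hij => hdisj i (Finset.mem_insert_of_mem hi) j (Finset.mem_insert_of_mem hj) hij)]

lemma signed_col {C : Set ℤ} (hC : Good C) :
    ({k | k ∈ C ∧ 1 ≤ k}.ncard : ℤ) - ({k | k ∉ C ∧ k ≤ 0}.ncard : ℤ) = charge C - 1 := by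
  have hfinA' : {k | k ∈ C ∧ 1 ≤ k}.Finite := by
    refine (hC.finite_above 0).subset (fun k hk => ⟨hk.1, by have := hk.2; omega⟩)
  have hfinB : {k | k ∉ C ∧ k < 0}.Finite := hC.finite_holes 0
  unfold charge
  by_cases h0 : 0 ∈ C
  · have hA : {z | z ∈ C ∧ 0 ≤ z} = insert 0 {k | k ∈ C ∧ 1 ≤ k} := by
      ext k
      simp only [mem_setOf_eq, mem_insert_iff]
      constructor
      · rintro ⟨hk, hk0⟩
        rcases eq_or_lt_of_le hk0 with h | h
        · exact Or.inl h.symm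
        · exact Or.inr ⟨hk, h⟩
      · rintro (rfl | ⟨hk, hk1⟩)
        · exact ⟨h0, le_refl 0⟩
        · exact ⟨hk, by omega⟩
    have hB : {z | z ∉ C ∧ z < 0} = {k | k ∉ C ∧ k ≤ 0} := by
      ext k
      simp only [mem_setOf_eq]
      constructor
      · rintro ⟨hk, hk0⟩; exact ⟨hk, le_of_lt hk0⟩
      · rintro ⟨hk, hk0⟩
        rcases eq_or_lt_of_le hk0 with h | h
        · exact absurd (h ▸ h0) hk
        · exact ⟨hk, h⟩
    rw [hA, hB, Set.ncard_insert_of_notMem (by simp) hfinA']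
    push_cast
    ring
  · have hA : {z | z ∈ C ∧ 0 ≤ z} = {k | k ∈ C ∧ 1 ≤ k} := by
      ext k
      simp only [mem_setOf_eq]
      constructor
      · rintro ⟨hk, hk0⟩
        rcases eq_or_lt_of_le hk0 with h | h
        · exact absurd (h ▸ hk) h0
        · exact ⟨hk, h⟩
      · rintro ⟨hk, hk1⟩; exact ⟨hk, by omega⟩
    have hB : {k | k ∉ C ∧ k ≤ 0} = insert 0 {z | z ∉ C ∧ z < 0} := by
      ext k
      simp only [mem_setOf_eq, mem_insert_iff]
      constructor
      · rintro ⟨hk, hk0⟩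
        rcases eq_or_lt_of_le hk0 with h | h
        · exact Or.inl h
        · exact Or.inr ⟨hk, h⟩
      · rintro (rfl | ⟨hk, hk0⟩)
        · exact ⟨h0, le_refl 0⟩
        · exact ⟨hk, le_of_lt hk0⟩
    rw [hA, hB, Set.ncard_insert_of_notMem (by simp) hfinB]
    push_cast
    ring

lemma charge_eq_sum {p : ℕ} (hp : 0 < p) {S : Set ℤ} (hS : Good S) :
    charge S = ∑ μ ∈ Finset.range p, (charge (col S p μ) - 1) := by
  have hp' : (0:ℤ) < p := by exact_mod_cast hp
  set G : ℕ → ℤ → ℤ := fun μ k => (p:ℤ) * k - μ - 1 with hG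
  have hGinj : ∀ μ, Function.Injective (G μ) := by
    intro μ x y hxy
    simp only [hG] at hxy
    have : (p:ℤ) * x = p * y := by omega
    exact mul_left_cancel₀ (ne_of_gt hp') this
  have hfinA : ∀ μ, {k | k ∈ col S p μ ∧ 1 ≤ k}.Finite := fun μ =>
    ((col_good hp hS μ).finite_above 0).subset (fun k hk => ⟨hk.1, by have := hk.2; omega⟩)
  have hfinB : ∀ μ, {k | k ∉ col S p μ ∧ k ≤ 0}.Finite := fun μ =>
    ((col_good hp hS μ).finite_holes 1).subset (fun k hk => ⟨hk.1, by have := hk.2; omega⟩)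
  have hdisjG : ∀ (A : ℕ → Set ℤ), ∀ μ ∈ Finset.range p, ∀ μ' ∈ Finset.range p, μ ≠ μ' →
      Disjoint (G μ '' A μ) (G μ' '' A μ') := by
    intro A μ hμ μ' hμ' hne
    rw [Set.disjoint_left]
    rintro x ⟨k, _, rfl⟩ ⟨k', _, hx⟩
    simp only [hG] at hx
    exact hne (decomp_unique hp (Finset.mem_range.mp hμ) (Finset.mem_range.mp hμ') hx.symm).1
  have hP : {z | z ∈ S ∧ 0 ≤ z} = ⋃ μ ∈ Finset.range p, G μ '' {k | k ∈ col S p μ ∧ 1 ≤ k} := by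
    ext z
    simp only [mem_setOf_eq, Set.mem_iUnion, Set.mem_image, Finset.mem_range]
    constructor
    · rintro ⟨hz, hz0⟩
      obtain ⟨μ, hμ, k, hk⟩ := decomp hp z
      have hμ1 : (μ:ℤ) < p := by exact_mod_cast hμ
      have hk1 : 1 ≤ k := by
        by_contra hc
        push_neg at hc
        have : (p:ℤ) * k ≤ p * 0 := mul_le_mul_of_nonneg_left (by omega) (le_of_lt hp')
        have hμ0 : (0:ℤ) ≤ μ := Int.ofNat_nonneg μ
        omega
      refine ⟨μ, hμ, ⟨k, ⟨?_, hk1⟩, ?_⟩⟩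
      · show (p:ℤ) * k - μ - 1 ∈ S
        rw [← hk]; exact hz
      · simp only [hG]; omega
    · rintro ⟨μ, hμ, k, ⟨hkcol, hk1⟩, rfl⟩
      have hμ1 : (μ:ℤ) < p := by exact_mod_cast hμ
      have h1 : (p:ℤ) * 1 ≤ p * k := mul_le_mul_of_nonneg_left hk1 (le_of_lt hp')
      exact ⟨hkcol, by simp only [hG]; linarith⟩
  have hQ : {z | z ∉ S ∧ z < 0} = ⋃ μ ∈ Finset.range p, G μ '' {k | k ∉ col S p μ ∧ k ≤ 0} := by
    ext z
    simp only [mem_setOf_eq, Set.mem_iUnion, Set.mem_image, Finset.mem_range]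
    constructor
    · rintro ⟨hz, hz0⟩
      obtain ⟨μ, hμ, k, hk⟩ := decomp hp z
      have hμ1 : (μ:ℤ) < p := by exact_mod_cast hμ
      have hμ0 : (0:ℤ) ≤ μ := Int.ofNat_nonneg μ
      have hk0 : k ≤ 0 := by
        by_contra hc
        push_neg at hc
        have : (p:ℤ) * 1 ≤ p * k := mul_le_mul_of_nonneg_left (by omega) (le_of_lt hp')
        omega
      refine ⟨μ, hμ, ⟨k, ⟨?_, hk0⟩, ?_⟩⟩
      · show ¬ ((p:ℤ) * k - μ - 1 ∈ S)
        rw [← hk]; exact hz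
      · simp only [hG]; omega
    · rintro ⟨μ, hμ, k, ⟨hkcol, hk0⟩, rfl⟩
      have hμ0 : (0:ℤ) ≤ μ := Int.ofNat_nonneg μ
      have h1 : (p:ℤ) * k ≤ p * 0 := mul_le_mul_of_nonneg_left hk0 (le_of_lt hp')
      exact ⟨hkcol, by simp only [hG]; linarith⟩
  have hPcard : {z | z ∈ S ∧ 0 ≤ z}.ncard = ∑ μ ∈ Finset.range p, {k | k ∈ col S p μ ∧ 1 ≤ k}.ncard := by
    rw [hP, ncard_biUnion _ _ (fun μ _ => (hfinA μ).image _) (hdisjG _)]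
    exact Finset.sum_congr rfl (fun μ _ => Set.ncard_image_of_injective _ (hGinj μ))
  have hQcard : {z | z ∉ S ∧ z < 0}.ncard = ∑ μ ∈ Finset.range p, {k | k ∉ col S p μ ∧ k ≤ 0}.ncard := by
    rw [hQ, ncard_biUnion _ _ (fun μ _ => (hfinB μ).image _) (hdisjG _)]
    exact Finset.sum_congr rfl (fun μ _ => Set.ncard_image_of_injective _ (hGinj μ))
  unfold charge
  rw [hPcard, hQcard]
  push_cast
  rw [← Finset.sum_sub_distrib]
  exact Finset.sum_congr rfl (fun μ _ => signed_col (col_good hp hS μ))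

section Core
variable {f : ℕ → ℕ} {p : ℕ}

lemma mem_coreMaya_iff {z : ℤ} :
    z ∈ coreMaya f p ↔ ∃ μ : ℕ, μ < p ∧ ∃ k : ℤ,
      k < charge (col (maya f) p μ) ∧ z = (p:ℤ) * k - μ - 1 := Iff.rfl

lemma coreMaya_eq_of_dc (hp : 0 < p) (hf : IsPartition f)
    (H : ∀ μ : ℕ, μ < p → DC (col (maya f) p μ)) : coreMaya f p = maya f := by
  have hcol : ∀ μ : ℕ, μ < p → col (maya f) p μ = Iio (charge (col (maya f) p μ)) :=
    fun μ hμ => dc_eq_Iio (col_good hp (good_maya hf) μ) (H μ hμ)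
  ext z
  rw [mem_coreMaya_iff]
  constructor
  · rintro ⟨μ, hμ, k, hk, rfl⟩
    have : k ∈ col (maya f) p μ := by rw [hcol μ hμ]; exact hk
    exact this
  · intro hz
    obtain ⟨μ, hμ, k, hk⟩ := decomp hp z
    have hkc : k ∈ col (maya f) p μ := by
      show (p:ℤ) * k - μ - 1 ∈ maya f
      rw [← hk]; exact hz
    rw [hcol μ hμ] at hkc
    exact ⟨μ, hμ, k, hkc, hk⟩

lemma good_coreMaya (hp : 0 < p) (hf : IsPartition f) : Good (coreMaya f p) := by
  have hp' : (0:ℤ) < p := by exact_mod_cast hp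
  have hne : ((Finset.range p).image fun μ => charge (col (maya f) p μ)).Nonempty :=
    (Finset.nonempty_range_iff.mpr (Nat.pos_iff_ne_zero.mp hp)).image _
  obtain ⟨m, hmle⟩ : ∃ m : ℤ, ∀ μ : ℕ, μ < p → m ≤ charge (col (maya f) p μ) :=
    ⟨((Finset.range p).image fun μ => charge (col (maya f) p μ)).min' hne, fun μ hμ =>
      Finset.min'_le _ _ (Finset.mem_image_of_mem (fun μ => charge (col (maya f) p μ)) (Finset.mem_range.mpr hμ))⟩
  obtain ⟨M, hMge⟩ : ∃ M : ℤ, ∀ μ : ℕ, μ < p → charge (col (maya f) p μ) ≤ M :=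
    ⟨((Finset.range p).image fun μ => charge (col (maya f) p μ)).max' hne, fun μ hμ =>
      Finset.le_max' _ _ (Finset.mem_image_of_mem (fun μ => charge (col (maya f) p μ)) (Finset.mem_range.mpr hμ))⟩
  constructor
  · refine ⟨(p:ℤ) * (m - 1) - p, fun z hz => ?_⟩
    obtain ⟨μ, hμ, k, hk⟩ := decomp hp z
    have hμ1 : (μ:ℤ) < p := by exact_mod_cast hμ
    have hμ0 : (0:ℤ) ≤ μ := Int.ofNat_nonneg μ
    have hpk : (p:ℤ) * k ≤ p * (m - 1) := by omega
    have hkm : k ≤ m - 1 := le_of_mul_le_mul_left hpk hp'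
    refine ⟨μ, hμ, k, ?_, hk⟩
    have := hmle μ hμ
    omega
  · refine ⟨(p:ℤ) * M, ?_⟩
    rintro z ⟨μ, hμ, k, hk, rfl⟩
    have hkM : k ≤ M := by have := hMge μ hμ; omega
    have h1 : (p:ℤ) * k ≤ p * M := mul_le_mul_of_nonneg_left hkM (le_of_lt hp')
    have hμ0 : (0:ℤ) ≤ μ := Int.ofNat_nonneg μ
    omega

lemma col_coreMaya (hp : 0 < p) (hf : IsPartition f) {μ : ℕ} (hμ : μ < p) :
    col (coreMaya f p) p μ = Iio (charge (col (maya f) p μ)) := by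
  ext k
  show (p:ℤ) * k - μ - 1 ∈ coreMaya f p ↔ _
  rw [mem_coreMaya_iff, mem_Iio]
  constructor
  · rintro ⟨μ', hμ', k', hk', heq⟩
    obtain ⟨h1, h2⟩ := decomp_unique hp hμ hμ' heq
    rw [h1, h2]
    exact hk'
  · intro hk
    exact ⟨μ, hμ, k, hk, rfl⟩

lemma charge_coreMaya (hp : 0 < p) (hf : IsPartition f) : charge (coreMaya f p) = 0 := by
  have h1 := charge_eq_sum hp (good_coreMaya hp hf)
  have h2 := charge_eq_sum hp (good_maya hf)
  rw [charge_maya hf] at h2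
  rw [h1]
  have hcongr : ∀ μ ∈ Finset.range p,
      charge (col (coreMaya f p) p μ) - 1 = charge (col (maya f) p μ) - 1 := by
    intro μ hμ
    rw [col_coreMaya hp hf (Finset.mem_range.mp hμ), charge_Iio]
  rw [Finset.sum_congr rfl hcongr, ← h2]

end Core
end PC

/-- a partition equals its own p-core iff no box has hook-length divisible by p. -/
theorem pcore_eq_self_iff (p : ℕ) (hp : 0 < p) (f : ℕ → ℕ) (hf : MM.IsPartition f) :
    MM.pcore f p = f ↔ ∀ c ∈ MM.cells f, ¬ ((p : ℤ) ∣ MM.hook f c) := by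
  rw [PC.hooks_iff_noslide hf p, PC.noslide_iff_dc hp]
  constructor
  · intro h μ hμ
    have hmaya : MM.maya f = MM.coreMaya f p := by
      have h1 := PC.maya_partOf (PC.good_coreMaya hp hf) (PC.charge_coreMaya hp hf)
      have h2 : MM.partOf (MM.coreMaya f p) = f := h
      rw [h2] at h1
      exact h1
    rw [hmaya, PC.col_coreMaya hp hf hμ]
    intro k' k hkk hk
    exact lt_of_le_of_lt hkk hk
  · intro H
    show MM.partOf (MM.coreMaya f p) = f
    rw [PC.coreMaya_eq_of_dc hp hf H, PC.partOf_maya hf]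
end

section
/- If λ has trivial p-core, then ∑_{x∈λ} (⌈c_λ(x)/p⌉ − ⌊c_λ(x)/p⌋) = (p−1)·|λ|/p. -/
open Set

/-!
Since `⌈c/p⌉ - ⌊c/p⌋ = 1 - [p ∣ c]`, it suffices to show that `p` times the number of boxes
whose content is divisible by `p` is `|λ|`. The contents of row `i` fill `[-i, λᵢ - i)`, which
contains `(λᵢ + (i - λᵢ) mod p - i mod p) / p` multiples of `p`; summed over the first `N` rows,
the claim becomes `∑ (i - λᵢ) mod p = ∑ i mod p`.

Here `(i - λᵢ) mod p` is the abacus column of the bead `λᵢ - i - 1`, and column `μ` holds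
`charge μ + ⌊(N - μ - 1) / p⌋` of the first `N` beads. Comparing with the empty partition shows
that the charges sum to `p`. If they were not all `1`, some column would have charge `≤ 0` and
another charge `≥ 2`, so the Maya set of the `p`-core would have a hole below a bead and the core
would be nonempty. Hence the first `N` beads are spread over the columns exactly as for the empty
partition, which gives the residue identity.
-/

open Finset

theorem Finset.sum_comp_eq_of_card_filter_eq {ι κ M : Type*} [DecidableEq κ] [AddCommMonoid M]
    {s : Finset ι} {t : Finset κ} {g g' : ι → κ} (hg : ∀ i ∈ s, g i ∈ t)
    (hg' : ∀ i ∈ s, g' i ∈ t)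
    (h : ∀ μ ∈ t, #{i ∈ s | g i = μ} = #{i ∈ s | g' i = μ}) (F : κ → M) :
    ∑ i ∈ s, F (g i) = ∑ i ∈ s, F (g' i) := by
  rw [← sum_fiberwise_of_maps_to hg, ← sum_fiberwise_of_maps_to hg']
  refine sum_congr rfl fun μ hμ => ?_
  rw [sum_congr rfl fun i hi => congrArg F (mem_filter.1 hi).2,
    sum_congr rfl fun i hi => congrArg F (mem_filter.1 hi).2, sum_const, sum_const, h μ hμ]

theorem Finset.exists_nonpos_and_two_le_of_sum_eq_card {ι : Type*} {s : Finset ι} {c : ι → ℤ}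
    (hsum : ∑ i ∈ s, c i = #s) {i : ι} (hi : i ∈ s) (hci : c i ≠ 1) :
    ∃ a ∈ s, ∃ b ∈ s, c a ≤ 0 ∧ 2 ≤ c b := by
  by_contra! h
  by_cases hneg : ∃ a ∈ s, c a ≤ 0
  · obtain ⟨a, ha, hca⟩ := hneg
    have hlt : ∑ b ∈ s, c b < ∑ b ∈ s, (1 : ℤ) :=
      sum_lt_sum (fun b hb => Int.lt_add_one_iff.1 (h a ha b hb hca)) ⟨a, ha, by omega⟩
    simp [hsum] at hlt
  · push Not at hneg
    have hlt : ∑ b ∈ s, (1 : ℤ) < ∑ b ∈ s, c b :=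
      sum_lt_sum (fun b hb => hneg b hb) ⟨i, hi, by have := hneg i hi; omega⟩
    simp [hsum] at hlt

theorem Int.neg_fdiv_neg_sub_fdiv {p : ℤ} (hp : 0 < p) (c : ℤ) :
    -((-c).fdiv p) - c.fdiv p = if p ∣ c then 0 else 1 := by
  rw [Int.fdiv_eq_ediv_of_nonneg _ hp.le, Int.fdiv_eq_ediv_of_nonneg _ hp.le, Int.neg_ediv]
  split_ifs <;> simp [Int.sign_eq_one_of_pos hp]

theorem Int.sum_range_neg_fdiv_neg_sub_fdiv {p : ℕ} (hp : 0 < p) (m i : ℕ) :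
    ∑ j ∈ Finset.range m, (-((-((j : ℤ) - i)).fdiv p) - ((j : ℤ) - i).fdiv p)
      = m - #{j ∈ Finset.range m | (p : ℤ) ∣ ((j : ℕ) : ℤ) - i} := by
  have hsplit := Finset.card_filter_add_card_filter_not (s := Finset.range m)
    fun j : ℕ => (p : ℤ) ∣ (j : ℤ) - i
  rw [Finset.card_range] at hsplit
  simp only [Int.neg_fdiv_neg_sub_fdiv (Int.natCast_pos.2 hp)]
  rw [Finset.sum_ite, Finset.sum_const_zero, Finset.sum_const, zero_add, nsmul_one]
  omega

theorem Nat.mul_card_filter_range_dvd_sub {p : ℕ} (hp : 0 < p) (m i : ℕ) :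
    (p : ℤ) * #{j ∈ Finset.range m | (p : ℤ) ∣ ((j : ℕ) : ℤ) - i}
      = m + ((i : ℤ) - m) % p - (i : ℤ) % p := by
  have hcard := Nat.Ico_filter_modEq_card 0 m hp i
  rw [← range_eq_Ico] at hcard
  simp only [Nat.cast_zero, zero_sub] at hcard
  rw [← Int.cast_natCast (R := ℚ) m, ← Int.cast_natCast (R := ℚ) i, ← Int.cast_sub,
    ← Int.cast_neg, Rat.ceil_intCast_div_natCast, Rat.ceil_intCast_div_natCast, neg_neg,
    neg_sub] at hcard
  simp_rw [fun x : ℕ => (Nat.ModEq.comm (a := x) (b := i) (n := p)).trans Nat.modEq_iff_dvd]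
    at hcard
  have hle : (i : ℤ) / p - ((i : ℤ) - m) / p ≥ 0 :=
    sub_nonneg.2 (Int.ediv_le_ediv (by positivity) (by omega))
  rw [max_eq_left (by linarith)] at hcard
  rw [hcard]
  linear_combination Int.emod_add_mul_ediv (i : ℤ) p - Int.emod_add_mul_ediv ((i : ℤ) - m) p

namespace Int

variable {p μ : ℕ}

theorem natMod_natCast_sub_mul (hμ : μ < p) (k : ℤ) : ((μ : ℤ) - p * k).natMod p = μ := by
  rw [Int.natMod, sub_eq_add_neg, ← mul_neg, Int.add_mul_emod_self_left,
    Int.emod_eq_of_lt (by positivity) (by omega), Int.toNat_natCast]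

theorem natCast_sub_mul_ediv (hμ : μ < p) (k : ℤ) : ((μ : ℤ) - p * k) / p = -k := by
  rw [sub_eq_add_neg, ← mul_neg, Int.add_mul_ediv_left _ _ (by omega),
    Int.ediv_eq_zero_of_lt (by positivity) (by omega), zero_add]

theorem natCast_natMod (hp : 0 < p) (x : ℤ) : (x.natMod p : ℤ) = x % p :=
  Int.toNat_of_nonneg (Int.emod_nonneg x (by omega))

theorem neg_sub_one_eq_mul_sub_natMod_sub_one (hp : 0 < p) (x : ℤ) :
    -x - 1 = p * -(x / p) - x.natMod p - 1 := by
  rw [natCast_natMod hp]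
  linear_combination Int.mul_ediv_add_emod x p

theorem neg_ediv_le_iff (hp : 0 < p) (a k : ℤ) : -(a / p) ≤ k ↔ -a ≤ p * k := by
  rw [neg_le, Int.le_ediv_iff_mul_le (by omega)]
  constructor <;> intro h <;> linarith

end Int

namespace MM

section Cells

variable {f : ℕ → ℕ} {N : ℕ}

theorem cells_eq_filter (hf : Antitone f) (hN : ∀ i, N ≤ i → f i = 0) :
    cells f = ↑{c ∈ range N ×ˢ range (f 0) | c.2 < f c.1} := by
  ext ⟨i, j⟩
  simp only [cells, Set.mem_ofPred_eq, coe_filter, mem_product, Finset.mem_range]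
  refine ⟨fun h => ⟨⟨?_, h.trans_le (hf (Nat.zero_le i))⟩, h⟩, fun h => h.2⟩
  by_contra hi
  rw [hN i (not_lt.1 hi)] at h
  exact Nat.not_lt_zero j h

theorem finsum_mem_cells {M : Type*} [AddCommMonoid M] (hf : Antitone f)
    (hN : ∀ i, N ≤ i → f i = 0) (g : ℕ × ℕ → M) :
    ∑ᶠ c ∈ cells f, g c = ∑ i ∈ range N, ∑ j ∈ range (f i), g (i, j) := by
  rw [cells_eq_filter hf hN, finsum_mem_coe_finset, sum_filter, sum_product]
  refine sum_congr rfl fun i _ => ?_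
  rw [← sum_filter]
  congr 1
  ext j
  simp only [mem_filter, Finset.mem_range]
  exact ⟨fun h => h.2, fun h => ⟨h.trans_le (hf (Nat.zero_le i)), h⟩⟩

theorem size_eq_sum_range (hf : Antitone f) (hN : ∀ i, N ≤ i → f i = 0) :
    size f = ∑ i ∈ range N, f i := by
  rw [size, cells_eq_filter hf hN, Set.ncard_coe_finset, card_eq_sum_ones,
    ← finsum_mem_coe_finset, ← cells_eq_filter hf hN, finsum_mem_cells hf hN]
  simp

end Cells

section Abacus

variable {f : ℕ → ℕ} {N p μ : ℕ}

theorem strictAnti_beads (hf : Antitone f) : StrictAnti fun i : ℕ => (f i : ℤ) - i - 1 :=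
  strictAnti_nat_of_succ_lt fun i => by have := hf (Nat.le_add_right i 1); push_cast; omega

theorem mem_maya_of_lt (hN : ∀ i, N ≤ i → f i = 0) {z : ℤ} (hz : z < -N) : z ∈ maya f :=
  ⟨(-z - 1).toNat, by rw [hN _ (by omega)]; omega⟩

theorem mem_maya_iff_of_le (hN : ∀ i, N ≤ i → f i = 0) {z : ℤ} (hz : -N ≤ z) :
    z ∈ maya f ↔ ∃ i < N, (f i : ℤ) - i - 1 = z := by
  refine ⟨fun ⟨i, hi⟩ => ⟨i, ?_, hi.symm⟩, fun ⟨i, _, hi⟩ => ⟨i, hi.symm⟩⟩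
  by_contra hiN
  rw [hN i (not_lt.1 hiN)] at hi
  omega

theorem ncard_ge_eq_charge_sub {C : Set ℤ} {t : ℤ} (ht : t ≤ 0) (hlow : ∀ k < t, k ∈ C)
    (hfin : {z | z ∈ C ∧ 0 ≤ z}.Finite) :
    ({k | k ∈ C ∧ t ≤ k}.ncard : ℤ) = charge C - t := by
  rw [charge]
  set H := {z | z ∉ C ∧ z < 0}
  have hH : H ⊆ Set.Ico t 0 := fun z hz =>
    ⟨not_lt.1 fun h => hz.1 (hlow z h), hz.2⟩
  have hsplit : {k | k ∈ C ∧ t ≤ k} = {z | z ∈ C ∧ 0 ≤ z} ∪ (Set.Ico t 0 \ H) := by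
    ext z
    simp only [H, Set.mem_ofPred_eq, Set.mem_union, Set.mem_sdiff, Set.mem_Ico]
    by_cases hz : z ∈ C <;> by_cases hz0 : 0 ≤ z <;> simp [hz, hz0] <;> omega
  have hdisj : Disjoint {z | z ∈ C ∧ 0 ≤ z} (Set.Ico t 0 \ H) :=
    Set.disjoint_left.2 fun z hz hz' => absurd hz.2 (not_le.2 hz'.1.2)
  have hIco : (Set.Ico t 0).ncard = (-t).toNat := by
    rw [← coe_Ico, Set.ncard_coe_finset, Int.card_Ico, zero_sub]
  have hHle : H.ncard ≤ (Set.Ico t 0).ncard := Set.ncard_le_ncard hH (Set.finite_Ico t 0)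
  rw [hsplit, Set.ncard_union_eq hdisj hfin ((Set.finite_Ico t 0).sdiff),
    Set.ncard_sdiff hH ((Set.finite_Ico t 0).subset hH)]
  omega

theorem card_filter_natMod_eq (hf : Antitone f) (hN : ∀ i, N ≤ i → f i = 0) (hμ : μ < p)
    (hμN : μ < N) :
    (#{i ∈ Finset.range N | (((i : ℕ) : ℤ) - f i).natMod p = μ} : ℤ)
      = charge (col (maya f) p μ) + (N - μ - 1) / p := by
  have hp : 0 < p := by omega
  set F := {i ∈ Finset.range N | (((i : ℕ) : ℤ) - f i).natMod p = μ}
  set Φ : ℕ → ℤ := fun i => -(((i : ℤ) - f i) / p)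
  set t : ℤ := -((N - μ - 1) / p)
  have hbead : ∀ i ∈ F, (f i : ℤ) - i - 1 = p * Φ i - μ - 1 := fun i hi => by
    rw [← (mem_filter.1 hi).2, ← Int.neg_sub_one_eq_mul_sub_natMod_sub_one hp]
    ring
  have hbead_le (i : ℕ) : (f i : ℤ) - i - 1 ≤ f 0 - 1 :=
    (strictAnti_beads hf).antitone (Nat.zero_le i) |>.trans (by simp)
  have ht : t ≤ 0 := neg_nonpos.2 (Int.ediv_nonneg (by omega) (by omega))
  have hlow : ∀ k < t, k ∈ col (maya f) p μ := fun k hk =>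
    mem_maya_of_lt hN (by linarith [(Int.neg_ediv_le_iff hp _ k).not.1 (not_le.2 hk)])
  have hfin : {k | k ∈ col (maya f) p μ ∧ 0 ≤ k}.Finite := by
    refine (Set.finite_Icc 0 (f 0 + μ : ℤ)).subset fun k ⟨⟨i, hi⟩, hk⟩ => ⟨hk, ?_⟩
    have : k ≤ p * k := le_mul_of_one_le_left hk (by exact_mod_cast hp)
    linarith [hbead_le i]
  have himage : {k | k ∈ col (maya f) p μ ∧ t ≤ k} = Φ '' F := by
    ext k
    constructor
    · rintro ⟨hk, htk⟩
      obtain ⟨i, hiN, hi⟩ :=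
        (mem_maya_iff_of_le hN (by linarith [(Int.neg_ediv_le_iff hp _ k).1 htk])).1 hk
      have hdiff : (i : ℤ) - f i = μ - p * k := by linarith
      refine ⟨i, mem_filter.2 ⟨Finset.mem_range.2 hiN, ?_⟩, ?_⟩
      · rw [hdiff, Int.natMod_natCast_sub_mul hμ]
      · simp only [Φ, hdiff, Int.natCast_sub_mul_ediv hμ, neg_neg]
    · rintro ⟨i, hi, rfl⟩
      have hiN : i < N := Finset.mem_range.1 (mem_filter.1 hi).1
      refine ⟨⟨i, (hbead i hi).symm⟩, (Int.neg_ediv_le_iff hp _ _).2 ?_⟩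
      linarith [hbead i hi]
  have hinj : Set.InjOn Φ F := fun i hi j hj hij =>
    (strictAnti_beads hf).injective (by rw [hbead i hi, hbead j hj, hij])
  have hcount := ncard_ge_eq_charge_sub ht hlow hfin
  rw [himage, hinj.ncard_image, Set.ncard_coe_finset] at hcount
  linarith

theorem charge_col_maya_zero (hμ : μ < p) : charge (col (maya fun _ => 0) p μ) = 1 := by
  have hN : ∀ i, 0 ≤ i → (fun _ : ℕ => 0) i = 0 := fun _ _ => rfl
  have hcol : col (maya fun _ => 0) p μ = Set.Iic 0 := by
    ext k
    show (p : ℤ) * k - μ - 1 ∈ maya _ ↔ k ≤ 0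
    constructor
    · intro hk
      by_contra! hk0
      obtain ⟨i, hi, -⟩ := (mem_maya_iff_of_le hN (by nlinarith)).1 hk
      exact Nat.not_lt_zero i hi
    · intro hk
      have : (p : ℤ) * k ≤ 0 := mul_nonpos_of_nonneg_of_nonpos (by positivity) hk
      exact mem_maya_of_lt hN (by push_cast; linarith)
  have hpos : {z | z ∈ Set.Iic (0 : ℤ) ∧ 0 ≤ z} = {0} := by
    ext z
    simp only [Set.mem_Iic, Set.mem_ofPred_eq, Set.mem_singleton_iff]
    omega
  have hneg : {z | z ∉ Set.Iic (0 : ℤ) ∧ z < 0} = ∅ := by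
    ext z
    simp only [Set.mem_Iic, Set.mem_ofPred_eq, Set.mem_empty_iff_false, iff_false]
    omega
  rw [charge, hcol, hpos, hneg]
  simp

theorem sum_charge_col (hf : IsPartition f) (hp : 0 < p) :
    ∑ μ ∈ Finset.range p, charge (col (maya f) p μ) = p := by
  obtain ⟨hanti, N₀, hN₀⟩ := hf
  have hN : ∀ i, max N₀ p ≤ i → f i = 0 := fun i hi => hN₀ i (le_of_max_le_left hi)
  have hcount {g : ℕ → ℕ} (hg : Antitone g) (hgN : ∀ i, max N₀ p ≤ i → g i = 0) :
      (max N₀ p : ℤ) = ∑ μ ∈ Finset.range p,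
        (charge (col (maya g) p μ) + (max N₀ p - μ - 1) / p) := by
    rw [← sum_congr rfl fun μ hμ =>
      card_filter_natMod_eq hg hgN (Finset.mem_range.1 hμ) (by simp at hμ; omega)]
    exact_mod_cast card_range (max N₀ p) ▸ card_eq_sum_card_fiberwise
      fun i _ => Finset.mem_coe.2 (Finset.mem_range.2 (Int.natMod_lt (by omega)))
  have hf := hcount hanti hN
  have h0 := hcount antitone_const fun _ _ => rfl
  rw [sum_congr rfl fun μ hμ => by rw [charge_col_maya_zero (Finset.mem_range.1 hμ)]] at h0
  rw [sum_add_distrib] at hf h0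
  simp only [sum_const, card_range, nsmul_eq_mul, mul_one] at h0
  linarith

theorem exists_partOf_ne_zero {S : Set ℤ} (hS : BddAbove S) (hlow : ∃ L, ∀ z < L, z ∈ S)
    {z w : ℤ} (hz : z ∉ S) (hw : w ∈ S) (hzw : z < w) : ∃ i, partOf S i ≠ 0 := by
  obtain ⟨L, hL⟩ := hlow
  set i := {v | v ∈ S ∧ w < v}.ncard
  have hwi : w ≤ bead S i := le_csSup (hS.mono fun _ hv => hv.1) ⟨hw, rfl⟩
  have hfin : {t | t ∉ S ∧ t < bead S i}.Finite :=
    (Set.finite_Ico L (bead S i)).subset fun t ht => ⟨not_lt.1 fun h => ht.1 (hL t h), ht.2⟩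
  exact ⟨i, ((Set.ncard_pos hfin).2 ⟨z, hz, by omega⟩).ne'⟩

theorem mem_coreMaya_iff (hp : 0 < p) (z : ℤ) :
    z ∈ coreMaya f p ↔ -((-z - 1) / p) < charge (col (maya f) p ((-z - 1).natMod p)) := by
  constructor
  · rintro ⟨μ, hμ, k, hk, rfl⟩
    rwa [show -((p : ℤ) * k - μ - 1) - 1 = μ - p * k by ring, Int.natMod_natCast_sub_mul hμ,
      Int.natCast_sub_mul_ediv hμ, neg_neg]
  · intro h
    refine ⟨_, Int.natMod_lt (by omega), _, h, ?_⟩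
    linarith [Int.neg_sub_one_eq_mul_sub_natMod_sub_one hp (-z - 1)]

theorem mul_sub_sub_one_mem_coreMaya_iff (hμ : μ < p) (k : ℤ) :
    (p : ℤ) * k - μ - 1 ∈ coreMaya f p ↔ k < charge (col (maya f) p μ) := by
  rw [mem_coreMaya_iff (by omega), show -((p : ℤ) * k - μ - 1) - 1 = μ - p * k by ring,
    Int.natMod_natCast_sub_mul hμ, Int.natCast_sub_mul_ediv hμ, neg_neg]

theorem bddAbove_coreMaya_and_exists_lt_mem (hp : 0 < p) :
    BddAbove (coreMaya f p) ∧ ∃ L, ∀ z < L, z ∈ coreMaya f p := by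
  obtain ⟨B, hB⟩ := ((Finset.range p).image fun μ => |charge (col (maya f) p μ)|).exists_le
  have hcharge {μ : ℕ} (hμ : μ < p) : |charge (col (maya f) p μ)| ≤ B :=
    hB _ (mem_image_of_mem _ (Finset.mem_range.2 hμ))
  refine ⟨⟨p * B, ?_⟩, ⟨-(p * (B + 1)), fun z hz => ?_⟩⟩
  · rintro z ⟨μ, hμ, k, hk, rfl⟩
    have hkB : k ≤ B := by linarith [le_abs_self (charge (col (maya f) p μ)), hcharge hμ]
    nlinarith
  · have hdiv : B + 1 ≤ (-z - 1) / p := (Int.le_ediv_iff_mul_le (by omega)).2 (by linarith)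
    have hμ := Int.natMod_lt (m := -z - 1) (n := p) (by omega)
    refine (mem_coreMaya_iff hp z).2 ?_
    linarith [neg_abs_le (charge (col (maya f) p ((-z - 1).natMod p))), hcharge hμ]

theorem charge_col_eq_one (hf : IsPartition f) (hp : 0 < p) (hcore : ∀ i, pcore f p i = 0)
    (hμ : μ < p) : charge (col (maya f) p μ) = 1 := by
  by_contra hμ1
  obtain ⟨a, ha, b, hb, hca, hcb⟩ := exists_nonpos_and_two_le_of_sum_eq_card
    (by rw [sum_charge_col hf hp, card_range]) (Finset.mem_range.2 hμ) hμ1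
  rw [Finset.mem_range] at ha hb
  obtain ⟨hbdd, hlow⟩ := bddAbove_coreMaya_and_exists_lt_mem (f := f) hp
  have hz := (mul_sub_sub_one_mem_coreMaya_iff (f := f) ha _).not.2 (lt_irrefl _)
  have hw := (mul_sub_sub_one_mem_coreMaya_iff (f := f) hb
    (charge (col (maya f) p b) - 1)).2 (by omega)
  obtain ⟨i, hi⟩ := exists_partOf_ne_zero hbdd hlow hz hw (by nlinarith)
  exact hi (hcore i)

theorem sum_emod_sub_eq_sum_emod (hf : IsPartition f) (hp : 0 < p)
    (hcore : ∀ i, pcore f p i = 0) (hN : ∀ i, N ≤ i → f i = 0) (hpN : p ≤ N) :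
    ∑ i ∈ Finset.range N, ((i : ℤ) - f i) % p = ∑ i ∈ Finset.range N, (i : ℤ) % p := by
  have hmaps (x : ℕ → ℤ) : ∀ i ∈ Finset.range N, (x i).natMod p ∈ Finset.range p :=
    fun i _ => Finset.mem_range.2 (Int.natMod_lt (by omega))
  simp_rw [← Int.natCast_natMod hp]
  refine sum_comp_eq_of_card_filter_eq (hmaps _) (hmaps _) (fun μ hμ => ?_) _
  rw [Finset.mem_range] at hμ
  have hcol := card_filter_natMod_eq hf.1 hN hμ (by omega)
  have hvac := card_filter_natMod_eq (f := fun _ => 0) antitone_const (fun _ _ => rfl) hμ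
    (by omega : μ < N)
  rw [charge_col_eq_one hf hp hcore hμ] at hcol
  rw [charge_col_maya_zero hμ, ← hcol] at hvac
  simp only [Nat.cast_zero, sub_zero] at hvac
  exact_mod_cast hvac.symm

end Abacus

end MM

/-- if λ has trivial p-core, ∑ (⌈c/p⌉ − ⌊c/p⌋) = (p−1)|λ|/p. -/
theorem content_ceil_sub_floor_sum (p : ℕ) (hp : 0 < p) (f : ℕ → ℕ) (hf : MM.IsPartition f)
    (hcore : ∀ i, MM.pcore f p i = 0) :
    (∑ᶠ c ∈ MM.cells f, ((-((-(MM.content c)).fdiv p)) - (MM.content c).fdiv p)) =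
      ((p : ℤ) - 1) * (MM.size f / p : ℕ) := by
  obtain ⟨N₀, hN₀⟩ := hf.2
  set N := max N₀ p
  have hN : ∀ i, N ≤ i → f i = 0 := fun i hi => hN₀ i (le_of_max_le_left hi)
  set K :=
    ∑ i ∈ Finset.range N, #{j ∈ Finset.range (f i) | (p : ℤ) ∣ ((j : ℕ) : ℤ) - i}
  have hsize : (MM.size f : ℤ) = p * K := by
    rw [MM.size_eq_sum_range hf.1 hN]
    push_cast [K, Finset.mul_sum, Nat.mul_card_filter_range_dvd_sub hp]
    rw [Finset.sum_sub_distrib, Finset.sum_add_distrib,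
      MM.sum_emod_sub_eq_sum_emod hf hp hcore hN (le_max_right _ _)]
    ring
  have hsum : (∑ᶠ c ∈ MM.cells f, ((-((-(MM.content c)).fdiv p)) - (MM.content c).fdiv p))
      = MM.size f - K := by
    rw [MM.finsum_mem_cells hf.1 hN, MM.size_eq_sum_range hf.1 hN]
    push_cast [K, ← Finset.sum_sub_distrib]
    exact Finset.sum_congr rfl fun i _ => Int.sum_range_neg_fdiv_neg_sub_fdiv hp (f i) i
  have hdiv : MM.size f / p = K := by
    rw [show MM.size f = p * K by exact_mod_cast hsize, Nat.mul_div_cancel_left _ hp]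
  rw [hsum, hdiv, hsize]
  ring
end

section
/- Gamma-ratio product identity: for integers r ≥ 1, 0 ≤ a < r, n, and I ≥ 0 (with all Gamma arguments positive), Γ(⌊(n+I−a)/r⌋ + a/r + 1)/Γ(⌊(n−a)/r⌋ + a/r + 1) = r^{−(⌊(n+I−a)/r⌋ − ⌊(n−a)/r⌋)} · ∏_{i=1}^{I} [[n+i]]_{r,a}, where [[m]]_{r,a} = m if m ≡ a (mod r) and [[m]]_{r,a} = 1 otherwise. -/
/-- the bracket [[m]]_{r,a} : equal to m if m ≡ a (mod r), and 1 otherwise. -/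
noncomputable def bra (r a : ℕ) (m : ℤ) : ℝ :=
  if m % r = (a : ℤ) % r then (m : ℝ) else 1

lemma ediv_succ_dvd {r m : ℤ} (hr : 0 < r) (h : (m + 1) % r = 0) :
    (m + 1) / r = m / r + 1 := by
  obtain ⟨k, hk⟩ := Int.dvd_of_emod_eq_zero h
  have hm : m = (r - 1) + r * (k - 1) := by linarith
  rw [hk, Int.mul_ediv_cancel_left _ hr.ne', hm, Int.add_mul_ediv_left _ _ hr.ne',
    Int.ediv_eq_zero_of_lt (by omega) (by omega)]
  ring

lemma ediv_succ_not_dvd {r m : ℤ} (hr : 0 < r) (h : (m + 1) % r ≠ 0) :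
    (m + 1) / r = m / r := by
  have hs := Int.emod_nonneg m hr.ne'
  have hs2 := Int.emod_lt_of_pos m hr
  have hm : m = r * (m / r) + m % r := (Int.mul_ediv_add_emod m r).symm
  have hne : m % r + 1 ≠ r := by
    intro he
    apply h
    have : m + 1 = r * (m / r + 1) := by linarith [mul_add r (m/r) 1]
    rw [this, Int.mul_emod_right]
  have : m + 1 = (m % r + 1) + r * (m / r) := by linarith
  rw [this, Int.add_mul_ediv_left _ _ hr.ne',
    Int.ediv_eq_zero_of_lt (by omega) (by omega), zero_add]

/-- Gamma-ratio product identity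
Γ(⌊(n+I−a)/r⌋+a/r+1)/Γ(⌊(n−a)/r⌋+a/r+1)
  = r^{−(⌊(n+I−a)/r⌋−⌊(n−a)/r⌋)} ∏_{i=1}^I [[n+i]]_{r,a}. -/
theorem gamma_ratio_product (r a : ℕ) (hr : 1 ≤ r) (ha : a < r) (n : ℤ) (I : ℕ)
    (h1 : (0 : ℝ) < ((n + I - a).fdiv r : ℝ) + (a : ℝ) / r + 1)
    (h2 : (0 : ℝ) < ((n - a).fdiv r : ℝ) + (a : ℝ) / r + 1) :
    Real.Gamma (((n + I - a).fdiv r : ℝ) + (a : ℝ) / r + 1) /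
        Real.Gamma (((n - a).fdiv r : ℝ) + (a : ℝ) / r + 1) =
      (r : ℝ) ^ (-((n + I - a).fdiv r - (n - a).fdiv r)) *
        ∏ i ∈ Finset.range I, bra r a (n + i + 1) := by
  have hrz : (0 : ℤ) < (r : ℤ) := by exact_mod_cast hr
  have hrR : (0 : ℝ) < (r : ℝ) := by exact_mod_cast hr
  simp only [Int.fdiv_eq_ediv_of_nonneg _ hrz.le] at h1 h2 ⊢
  clear h1
  induction I with
  | zero =>
    simp only [Nat.cast_zero, add_zero, Finset.range_zero, Finset.prod_empty, mul_one,
      sub_self, neg_zero, zpow_zero]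
    exact div_self (Real.Gamma_pos_of_pos h2).ne'
  | succ I ih =>
    have hmono : (n - a) / (r:ℤ) ≤ (n + I - a) / (r:ℤ) :=
      Int.ediv_le_ediv hrz (by omega)
    have hposI : (0 : ℝ) < (((n + I - a) / (r:ℤ) : ℤ) : ℝ) + (a : ℝ) / r + 1 := by
      have : (((n - a) / (r:ℤ) : ℤ) : ℝ) ≤ (((n + I - a) / (r:ℤ) : ℤ) : ℝ) := by
        exact_mod_cast hmono
      linarith
    have hstep : n + ((I:ℤ) + 1) - a = (n + I - a) + 1 := by ring
    have hcast : (n + ((I:ℕ)+1 : ℕ) - a : ℤ) = (n + I - a) + 1 := by push_cast; ring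
    have hbra : ((n + (I:ℤ) + 1) % r = (a:ℤ) % r) ↔ ((n + I - a) + 1) % r = 0 := by
      rw [Int.emod_eq_emod_iff_emod_sub_eq_zero]
      constructor <;> intro h <;> [skip; skip] <;>
        · convert h using 2; ring
    rw [Finset.prod_range_succ, hcast]
    by_cases hd : ((n + I - a) + 1) % (r:ℤ) = 0
    · have hQ := ediv_succ_dvd hrz hd
      rw [hQ]
      have hGamma : Real.Gamma ((((n + I - a) / (r:ℤ) + 1 : ℤ) : ℝ) + (a:ℝ)/r + 1) =
          ((((n + I - a) / (r:ℤ) : ℤ) : ℝ) + (a:ℝ)/r + 1) *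
          Real.Gamma ((((n + I - a) / (r:ℤ) : ℤ) : ℝ) + (a:ℝ)/r + 1) := by
        rw [show ((((n + I - a) / (r:ℤ) + 1 : ℤ) : ℝ) + (a:ℝ)/r + 1) =
            ((((n + I - a) / (r:ℤ) : ℤ) : ℝ) + (a:ℝ)/r + 1) + 1 by push_cast; ring,
          Real.Gamma_add_one hposI.ne']
      rw [hGamma, mul_div_assoc, ih]
      have hbra' : bra r a (n + I + 1) = ((n:ℝ) + I + 1) := by
        unfold bra
        rw [if_pos (hbra.mpr hd)]
        push_cast; ring
      obtain ⟨k, hk⟩ := Int.dvd_of_emod_eq_zero hd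
      have hkval : (n + I - a) / (r:ℤ) + 1 = k := by
        rw [hQ.symm, hk, Int.mul_ediv_cancel_left _ hrz.ne']
      have hfac : (((n + I - a) / (r:ℤ) : ℤ) : ℝ) + (a:ℝ)/r + 1 = ((n:ℝ) + I + 1) / r := by
        have : ((n:ℝ) + I - a) + 1 = (r:ℝ) * k := by exact_mod_cast congrArg (Int.cast : ℤ → ℝ) hk
        have hk' : (((n + I - a) / (r:ℤ) : ℤ) : ℝ) = (k:ℝ) - 1 := by
          exact_mod_cast congrArg (Int.cast : ℤ → ℝ) (by omega : (n + I - a) / (r:ℤ) = k - 1)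
        rw [hk']
        field_simp
        nlinarith [this]
      rw [hbra', hfac]
      rw [show -((n + I - a) / (r:ℤ) + 1 - (n - a) / (r:ℤ)) =
          -((n + I - a) / (r:ℤ) - (n - a) / (r:ℤ)) + (-1) by ring, zpow_add₀ hrR.ne']
      field_simp
    · have hQ := ediv_succ_not_dvd hrz hd
      rw [hQ, ih]
      have hbra' : bra r a (n + I + 1) = 1 := by
        unfold bra
        rw [if_neg (fun h => hd (hbra.mp h))]
      rw [hbra', mul_one]
end
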